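/- arXiv:1307.1233 — 7 statements merged into one kernel-verified Lean document; each statement's English description precedes it below -/
import Mathlib

section
/- Let α > 0 and a > 0. If αa > 1, then there exists exactly one κ ∈ (0, α/2) satisfying (α/2)·exp(−2κa) = α/2 − κ; if αa ≤ 1, then no κ ∈ (0, α/2) satisfies this equation. -/
/-!
The defect `g κ = (α/2) exp (-2κa) - (α/2 - κ)` is strictly convex, vanishes at `0`, has
`g'(0) = 1 - αa` and `g (α/2) > 0`. Strict convexity makes the secant slopes of `g` from `0`
strictly increasing, so `g` has at most one positive root, and none at all when `g'(0) ≥ 0`.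
When `g'(0) < 0`, `g` dips below zero right after `0`, and the intermediate value theorem gives a
root before `α/2`.
-/

open Real Set Filter Topology

section

variable {f : ℝ → ℝ} {f' x b : ℝ}

lemma HasDerivWithinAt.eventually_nhdsGT_lt_of_neg (hf : HasDerivWithinAt f f' (Ioi x) x)
    (hf' : f' < 0) : ∀ᶠ y in 𝓝[>] x, f y < f x := by
  have hslope := (hasDerivWithinAt_iff_tendsto_slope' (lt_irrefl x)).1 hf
  filter_upwards [hslope.eventually (gt_mem_nhds hf'), self_mem_nhdsWithin] with y hy hxy
  exact (slope_neg_iff_of_le (le_of_lt hxy)).1 hy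

lemma StrictConvexOn.eq_of_apply_eq_of_ne {s : Set ℝ} (hf : StrictConvexOn ℝ s f) {y z : ℝ}
    (hx : x ∈ s) (hy : y ∈ s) (hz : z ∈ s) (hyx : y ≠ x) (hzx : z ≠ x) (hfy : f y = f x)
    (hfz : f z = f x) : y = z := by
  by_contra hyz
  rcases lt_or_gt_of_ne hyz with h | h
  · have := hf.secant_strict_mono hx hy hz hyx hzx h
    simp [hfy, hfz] at this
  · have := hf.secant_strict_mono hx hz hy hzx hyx h
    simp [hfy, hfz] at this

lemma StrictConvexOn.apply_lt_apply_of_hasDerivWithinAt_Ioi {s : Set ℝ} {y : ℝ}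
    (hf : StrictConvexOn ℝ s f) (hx : x ∈ s) (hy : y ∈ s) (hxy : x < y)
    (hf' : HasDerivWithinAt f f' (Ioi x) x) (hf'_nonneg : 0 ≤ f') : f x < f y :=
  (slope_pos_iff_of_le hxy.le).1 <|
    hf'_nonneg.trans_lt (hf.lt_slope_of_hasDerivWithinAt_Ioi hx hy hxy hf')

lemma StrictConvexOn.existsUnique_mem_Ioo_apply_eq (hf : StrictConvexOn ℝ (Icc x b) f)
    (hcont : ContinuousOn f (Icc x b)) (hf' : HasDerivWithinAt f f' (Ioi x) x) (hf'_neg : f' < 0)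
    (hxb : x < b) (hb : f x < f b) : ∃! y, y ∈ Ioo x b ∧ f y = f x := by
  obtain ⟨c, ⟨hxc, hcb⟩, hfc⟩ : ∃ c ∈ Ioo x b, f c < f x :=
    ((hf'.eventually_nhdsGT_lt_of_neg hf'_neg).and (Ioo_mem_nhdsGT hxb)).exists.imp
      fun c hc => ⟨hc.2, hc.1⟩
  obtain ⟨y, hy, hfy⟩ := intermediate_value_Ioo hcb.le (hcont.mono (Icc_subset_Icc_left hxc.le))
    ⟨hfc, hb⟩
  refine ⟨y, ⟨⟨hxc.trans hy.1, hy.2⟩, hfy⟩, fun z ⟨hz, hfz⟩ => ?_⟩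
  exact hf.eq_of_apply_eq_of_ne (left_mem_Icc.2 hxb.le) (Ioo_subset_Icc_self hz)
    (Ioo_subset_Icc_self ⟨hxc.trans hy.1, hy.2⟩) hz.1.ne' (hxc.trans hy.1).ne' hfz hfy

end

noncomputable def excitedStateDefect (α a κ : ℝ) : ℝ :=
  α / 2 * exp (-2 * κ * a) - (α / 2 - κ)

section

variable (α a : ℝ)

lemma hasDerivAt_excitedStateDefect (κ : ℝ) :
    HasDerivAt (excitedStateDefect α a) (1 - α * a * exp (-2 * κ * a)) κ := by
  have hlin : HasDerivAt (fun κ : ℝ => -2 * κ * a) (-2 * a) κ := by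
    simpa using ((hasDerivAt_id κ).const_mul (-2)).mul_const a
  exact ((hlin.exp.const_mul (α / 2)).sub ((hasDerivAt_id κ).const_sub (α / 2))).congr_deriv
    (by ring)

lemma continuous_excitedStateDefect : Continuous (excitedStateDefect α a) :=
  continuous_iff_continuousAt.2 fun κ => (hasDerivAt_excitedStateDefect α a κ).continuousAt

lemma excitedStateDefect_zero : excitedStateDefect α a 0 = 0 := by
  simp [excitedStateDefect]

variable {α a}

lemma excitedStateDefect_half_pos (hα : 0 < α) : 0 < excitedStateDefect α a (α / 2) := by
  simp only [excitedStateDefect, sub_self, sub_zero]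
  positivity

lemma strictConvexOn_excitedStateDefect (hα : 0 < α) (ha : 0 < a) :
    StrictConvexOn ℝ univ (excitedStateDefect α a) := by
  have hderiv : deriv (excitedStateDefect α a) = fun κ => 1 - α * a * exp (-2 * κ * a) :=
    funext fun κ => (hasDerivAt_excitedStateDefect α a κ).deriv
  refine StrictMono.strictConvexOn_univ_of_deriv (continuous_excitedStateDefect α a) ?_
  intro κ₁ κ₂ h
  rw [hderiv]
  have hexp : exp (-2 * κ₂ * a) < exp (-2 * κ₁ * a) := exp_lt_exp.2 (by nlinarith)
  have hαa : 0 < α * a := mul_pos hα ha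
  dsimp only
  nlinarith

end

/-- for `α, a > 0`, the equation `(α/2)·exp(−2κa) = α/2 − κ` has
exactly one solution in `(0, α/2)` when `αa > 1`, and none when `αa ≤ 1`. -/
theorem excited_state_kappa (α a : ℝ) (hα : 0 < α) (ha : 0 < a) :
    (1 < α * a →
      ∃! κ : ℝ, κ ∈ Set.Ioo 0 (α / 2) ∧
        (α / 2) * Real.exp (-2 * κ * a) = α / 2 - κ) ∧
    (α * a ≤ 1 →
      ∀ κ ∈ Set.Ioo 0 (α / 2),
        (α / 2) * Real.exp (-2 * κ * a) ≠ α / 2 - κ) := by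
  have hconv := strictConvexOn_excitedStateDefect hα ha
  have hderiv₀ : HasDerivAt (excitedStateDefect α a) (1 - α * a) 0 := by
    simpa using hasDerivAt_excitedStateDefect α a 0
  have hzero_iff (κ : ℝ) : excitedStateDefect α a κ = excitedStateDefect α a 0 ↔
      α / 2 * exp (-2 * κ * a) = α / 2 - κ := by
    rw [excitedStateDefect_zero, excitedStateDefect, sub_eq_zero]
  refine ⟨fun hαa => ?_, fun hαa κ hκ => ?_⟩
  · simp_rw [← hzero_iff]
    refine (hconv.subset (subset_univ _) (convex_Icc _ _)).existsUnique_mem_Ioo_apply_eq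
      (continuous_excitedStateDefect α a).continuousOn hderiv₀.hasDerivWithinAt (by linarith)
      (half_pos hα) ?_
    rw [excitedStateDefect_zero]
    exact excitedStateDefect_half_pos hα
  · rw [Ne, ← hzero_iff]
    exact (hconv.apply_lt_apply_of_hasDerivWithinAt_Ioi (mem_univ _) (mem_univ _) hκ.1
      hderiv₀.hasDerivWithinAt (by linarith)).ne'
end

section
/- Let α > 0 and a > 0. The equation (α²/4)·exp(−4κa) = (κ − α/2)², considered for κ ∈ (0, ∞), has exactly two solutions if αa > 1 and exactly one solution if αa ≤ 1. -/
/-- The "even" branch equation `κ - α/2 = (α/2)·exp(-2aκ)` has a strictly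
monotone left-minus-right side. -/
private lemma gmono (α a : ℝ) (hα : 0 < α) (ha : 0 < a) :
    StrictMono (fun κ : ℝ => κ - α / 2 - (α / 2) * Real.exp (-2 * a * κ)) := by
  intro x y hxy
  have h1 : Real.exp (-2 * a * y) ≤ Real.exp (-2 * a * x) :=
    Real.exp_le_exp.2 (by nlinarith)
  have h2 : (0:ℝ) < α / 2 := by linarith
  simp only
  nlinarith

private lemma gexists (α a : ℝ) (hα : 0 < α) (ha : 0 < a) :
    ∃ κ : ℝ, 0 < κ ∧ κ - α / 2 = (α / 2) * Real.exp (-2 * a * κ) := by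
  set g : ℝ → ℝ := fun κ => κ - α / 2 - (α / 2) * Real.exp (-2 * a * κ) with hg
  have hcont : Continuous g := by fun_prop
  have h0 : g 0 = -α := by simp [hg]; ring
  have hexpneg : Real.exp (-2 * a * α) < 1 := by
    rw [Real.exp_lt_one_iff]; nlinarith
  have hgα : 0 < g α := by
    have : 0 < (α / 2) * (1 - Real.exp (-2 * a * α)) := by
      apply mul_pos (by linarith); linarith
    simp only [hg]; nlinarith
  have hmem : (0:ℝ) ∈ Set.Ioo (g 0) (g α) := by
    constructor <;> [linarith [h0]; exact hgα]
  obtain ⟨κ, hκmem, hκ⟩ := intermediate_value_Ioo (le_of_lt hα) hcont.continuousOn hmem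
  refine ⟨κ, hκmem.1, ?_⟩
  have : κ - α / 2 - (α / 2) * Real.exp (-2 * a * κ) = 0 := hκ
  linarith

/-- If `αa ≤ 1` the "odd" branch has no positive solution. -/
private lemma fpos (α a : ℝ) (hα : 0 < α) (ha : 0 < a) (h1 : α * a ≤ 1)
    (κ : ℝ) (hκ : 0 < κ) :
    (α / 2) * Real.exp (-2 * a * κ) ≠ α / 2 - κ := by
  have hx : (-2 * a * κ) ≠ 0 := by nlinarith
  have hE : (-2 * a * κ) + 1 < Real.exp (-2 * a * κ) := Real.add_one_lt_exp hx
  intro h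
  nlinarith

/-- Uniqueness of a positive solution of the odd branch, via strict convexity
of `exp`. -/
private lemma funiq (α a : ℝ) (hα : 0 < α) (ha : 0 < a)
    {x y : ℝ} (hx : 0 < x) (hy : 0 < y)
    (hfx : (α / 2) * Real.exp (-2 * a * x) = α / 2 - x)
    (hfy : (α / 2) * Real.exp (-2 * a * y) = α / 2 - y) : x = y := by
  -- wlog x < y and derive a contradiction
  rcases lt_trichotomy x y with h | h | h
  case inr.inl => exact h
  all_goals {
    -- symm case handled by same argument with roles swapped
    first
    | (exact absurd h (by
        -- main argument: x < y leads to contradiction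
        intro hxy
        have hyne : y ≠ 0 := ne_of_gt hy
        have hdivpos : 0 < x / y := div_pos hx hy
        have hdivlt : x / y < 1 := (div_lt_one hy).2 hxy
        have hs : 0 < 1 - x / y := by linarith
        have hne : (0:ℝ) ≠ -2 * a * y := by nlinarith
        have hconv := strictConvexOn_exp.2 (Set.mem_univ (0:ℝ))
          (Set.mem_univ (-2 * a * y)) hne hs hdivpos (by ring)
        simp only [smul_eq_mul, mul_zero, zero_add, Real.exp_zero, mul_one] at hconv
        have harg : (x / y) * (-2 * a * y) = -2 * a * x := by
          field_simp
        rw [harg] at hconv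
        -- multiply the convexity inequality by α/2 > 0
        have h2 : (0:ℝ) < α / 2 := by linarith
        have hmul := mul_lt_mul_of_pos_left hconv h2
        have hxyy : (x / y) * y = x := div_mul_cancel₀ x hyne
        nlinarith [hmul, hfx, hfy, hxyy]))
    | (exact absurd h (by
        intro hxy
        have hyne : x ≠ 0 := ne_of_gt hx
        have hdivpos : 0 < y / x := div_pos hy hx
        have hdivlt : y / x < 1 := (div_lt_one hx).2 hxy
        have hs : 0 < 1 - y / x := by linarith
        have hne : (0:ℝ) ≠ -2 * a * x := by nlinarith
        have hconv := strictConvexOn_exp.2 (Set.mem_univ (0:ℝ))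
          (Set.mem_univ (-2 * a * x)) hne hs hdivpos (by ring)
        simp only [smul_eq_mul, mul_zero, zero_add, Real.exp_zero, mul_one] at hconv
        have harg : (y / x) * (-2 * a * x) = -2 * a * y := by
          field_simp
        rw [harg] at hconv
        have h2 : (0:ℝ) < α / 2 := by linarith
        have hmul := mul_lt_mul_of_pos_left hconv h2
        have hxyy : (y / x) * x = y := div_mul_cancel₀ y hyne
        nlinarith [hmul, hfx, hfy, hxyy]))
  }

/-- Existence of a positive solution of the odd branch when `αa > 1`. -/
private lemma fexists (α a : ℝ) (hα : 0 < α) (ha : 0 < a) (h1 : 1 < α * a) :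
    ∃ κ : ℝ, 0 < κ ∧ (α / 2) * Real.exp (-2 * a * κ) = α / 2 - κ := by
  set f : ℝ → ℝ := fun κ => κ - α / 2 + (α / 2) * Real.exp (-2 * a * κ) with hf
  have hcont : Continuous f := by fun_prop
  set κ₀ : ℝ := (α * a - 1) / (4 * a) with hκ₀
  have hκ₀pos : 0 < κ₀ := div_pos (by linarith) (by linarith)
  have hκ₀half : κ₀ < α / 2 := by
    rw [hκ₀, div_lt_iff₀ (by linarith)]; nlinarith
  have hfκ₀ : f κ₀ < 0 := by
    have hxne : (2 * a * κ₀) ≠ 0 := by positivity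
    have hE : (2 * a * κ₀) + 1 < Real.exp (2 * a * κ₀) := Real.add_one_lt_exp hxne
    have hEeq : Real.exp (-2 * a * κ₀) = (Real.exp (2 * a * κ₀))⁻¹ := by
      rw [← Real.exp_neg]; ring_nf
    have hPpos : 0 < Real.exp (2 * a * κ₀) := Real.exp_pos _
    have h2aκ : 2 * a * κ₀ = (α * a - 1) / 2 := by
      rw [hκ₀]; field_simp; ring
    simp only [hf]
    rw [hEeq]
    have key : (κ₀ - α / 2 + α / 2 * (Real.exp (2 * a * κ₀))⁻¹) * Real.exp (2 * a * κ₀)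
        < 0 := by
      have hexpand : (κ₀ - α / 2 + α / 2 * (Real.exp (2 * a * κ₀))⁻¹) *
          Real.exp (2 * a * κ₀)
          = (κ₀ - α / 2) * Real.exp (2 * a * κ₀) + α / 2 := by
        field_simp
      rw [hexpand]
      have hneg : κ₀ - α / 2 < 0 := by linarith
      have : (κ₀ - α / 2) * Real.exp (2 * a * κ₀) < (κ₀ - α / 2) * ((2 * a * κ₀) + 1) :=
        mul_lt_mul_of_neg_left hE hneg
      nlinarith [h2aκ, hκ₀pos, h1]
    nlinarith [key, hPpos]
  have hfhalf : 0 < f (α / 2) := by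
    have : 0 < (α / 2) * Real.exp (-2 * a * (α / 2)) := by positivity
    simp only [hf]; linarith
  have hmem : (0:ℝ) ∈ Set.Ioo (f κ₀) (f (α / 2)) := ⟨hfκ₀, hfhalf⟩
  obtain ⟨κ, hκmem, hκ⟩ :=
    intermediate_value_Ioo (le_of_lt hκ₀half) hcont.continuousOn hmem
  refine ⟨κ, lt_trans hκ₀pos hκmem.1, ?_⟩
  have : κ - α / 2 + (α / 2) * Real.exp (-2 * a * κ) = 0 := hκ
  linarith

/-- The equation factorises into the two branches. -/
private lemma branch_iff (α a κ : ℝ) :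
    (α ^ 2 / 4) * Real.exp (-4 * κ * a) = (κ - α / 2) ^ 2 ↔
      ((α / 2) * Real.exp (-2 * a * κ) = κ - α / 2 ∨
       (α / 2) * Real.exp (-2 * a * κ) = α / 2 - κ) := by
  have h1 : (α ^ 2 / 4) * Real.exp (-4 * κ * a)
      = ((α / 2) * Real.exp (-2 * a * κ)) ^ 2 := by
    rw [mul_pow, sq (Real.exp _), ← Real.exp_add]
    ring_nf
  rw [h1, sq_eq_sq_iff_eq_or_eq_neg]
  constructor
  · rintro (h | h)
    · exact Or.inl h
    · right; linarith
  · rintro (h | h)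
    · exact Or.inl h
    · right; linarith

/-- the eigenvalue condition `(α²/4)·exp(−4κa) = (κ − α/2)²` for
`κ > 0` has exactly two solutions if `αa > 1` and exactly one if `αa ≤ 1`. -/
theorem eigenvalue_condition_count (α a : ℝ) (hα : 0 < α) (ha : 0 < a) :
    (1 < α * a →
      {κ : ℝ | 0 < κ ∧
        (α ^ 2 / 4) * Real.exp (-4 * κ * a) = (κ - α / 2) ^ 2}.ncard = 2) ∧
    (α * a ≤ 1 →
      {κ : ℝ | 0 < κ ∧
        (α ^ 2 / 4) * Real.exp (-4 * κ * a) = (κ - α / 2) ^ 2}.ncard = 1) := by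
  obtain ⟨κp, hκppos, hκpeq⟩ := gexists α a hα ha
  have hgm := gmono α a hα ha
  -- the even-branch root is unique among all reals
  have guniq : ∀ κ : ℝ, (α / 2) * Real.exp (-2 * a * κ) = κ - α / 2 → κ = κp := by
    intro κ hκ
    have h1 : (fun κ : ℝ => κ - α / 2 - (α / 2) * Real.exp (-2 * a * κ)) κ
        = (fun κ : ℝ => κ - α / 2 - (α / 2) * Real.exp (-2 * a * κ)) κp := by
      simp only; linarith
    exact hgm.injective h1
  constructor
  · -- two solutions
    intro h1
    obtain ⟨κm, hκmpos, hκmeq⟩ := fexists α a hα ha h1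
    have hset : {κ : ℝ | 0 < κ ∧
        (α ^ 2 / 4) * Real.exp (-4 * κ * a) = (κ - α / 2) ^ 2} = {κm, κp} := by
      ext κ
      simp only [Set.mem_setOf_eq, Set.mem_insert_iff, Set.mem_singleton_iff]
      constructor
      · rintro ⟨hκpos, heq⟩
        rcases (branch_iff α a κ).1 heq with h | h
        · exact Or.inr (guniq κ h)
        · exact Or.inl (funiq α a hα ha hκpos hκmpos h hκmeq)
      · rintro (rfl | rfl)
        · exact ⟨hκmpos, (branch_iff α a κ).2 (Or.inr hκmeq)⟩
        · exact ⟨hκppos, (branch_iff α a κ).2 (Or.inl hκpeq.symm)⟩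
    rw [hset]
    apply Set.ncard_pair
    -- κm < α/2 < κp
    have hE1 : 0 < (α / 2) * Real.exp (-2 * a * κm) := by positivity
    have hE2 : 0 < (α / 2) * Real.exp (-2 * a * κp) := by positivity
    intro hcontra
    rw [hcontra] at hκmeq
    linarith [hκpeq, hκmeq]
  · -- one solution
    intro h1
    have hset : {κ : ℝ | 0 < κ ∧
        (α ^ 2 / 4) * Real.exp (-4 * κ * a) = (κ - α / 2) ^ 2} = {κp} := by
      ext κ
      simp only [Set.mem_setOf_eq, Set.mem_singleton_iff]
      constructor
      · rintro ⟨hκpos, heq⟩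
        rcases (branch_iff α a κ).1 heq with h | h
        · exact guniq κ h
        · exact absurd h (fpos α a hα ha h1 κ hκpos)
      · rintro rfl
        exact ⟨hκppos, (branch_iff α a κ).2 (Or.inl hκpeq.symm)⟩
    rw [hset, Set.ncard_singleton]
end

section
/- Let α > 0, a > 0 and κ > 0. The following are equivalent: (i) there exists a nonzero bounded continuous function ψ : ℝ → ℝ which is twice differentiable at every point x ∉ {−a, a} with ψ''(x) = κ²ψ(x) there, whose derivative ψ' has one-sided limits ψ'(±a+0) and ψ'(±a−0) at both points ±a, and which satisfies the interface conditions ψ'(a+0) − ψ'(a−0) = −αψ(a) and ψ'(−a+0) − ψ'(−a−0) = −αψ(−a); (ii) (α²/4)·exp(−4κa) = (κ − α/2)². -/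
/-!
Off `±a` the equation `ψ'' = κ²ψ` makes `ψ` a combination `p e^{κx} + q e^{-κx}` on each of the
three intervals, and boundedness removes the growing exponential on the two outer half-lines.
So `ψ` is its restriction to `[-a, a]` extended by decaying exponentials, whose one-sided
derivatives at `±a` are `∓κψ(±a)`. The jump conditions thereby become the Robin conditions
`φ'(a) = (α - κ) φ(a)`, `φ'(-a) = (κ - α) φ(-a)` for `φ = p e^{κx} + q e^{-κx}`: a homogeneous
linear system in `(p, q)` with determinant `(2κ - α)² e^{2κa} - α² e^{-2κa}`, which vanishes
exactly when `(α²/4) e^{-4κa} = (κ - α/2)²`. Conversely, a nonzero solution `(p, q)` of the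
system, extended by decaying exponentials, is an eigenfunction.
-/

open Filter Topology Real Set

noncomputable def expComb (κ p q x : ℝ) : ℝ := p * exp (κ * x) + q * exp (-(κ * x))

def SolvesEigenEqAt (κ : ℝ) (ψ : ℝ → ℝ) (x : ℝ) : Prop :=
  DifferentiableAt ℝ ψ x ∧ DifferentiableAt ℝ (deriv ψ) x ∧ deriv (deriv ψ) x = κ ^ 2 * ψ x

theorem exp_mul_exp_neg (y : ℝ) : exp y * exp (-y) = 1 := by
  rw [← exp_add, add_neg_cancel, exp_zero]

section ExpComb

variable {κ p q : ℝ}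

theorem hasDerivAt_expComb (x : ℝ) :
    HasDerivAt (expComb κ p q) (expComb κ (κ * p) (-(κ * q)) x) x := by
  have hlin : HasDerivAt (fun y => κ * y) κ x := by simpa using (hasDerivAt_id x).const_mul κ
  exact ((hlin.exp.const_mul p).add (hlin.neg.exp.const_mul q)).congr_deriv
    (by simp only [expComb, Pi.neg_apply]; ring)

theorem deriv_expComb : deriv (expComb κ p q) = expComb κ (κ * p) (-(κ * q)) :=
  funext fun x => (hasDerivAt_expComb x).deriv

theorem continuous_expComb : Continuous (expComb κ p q) := by
  unfold expComb; fun_prop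

theorem continuous_deriv_expComb : Continuous (deriv (expComb κ p q)) := by
  rw [deriv_expComb]; exact continuous_expComb

theorem deriv_expComb_zero_left (x : ℝ) : deriv (expComb κ 0 q) x = -κ * expComb κ 0 q x := by
  simp only [deriv_expComb, expComb]; ring

theorem deriv_expComb_zero_right (x : ℝ) : deriv (expComb κ p 0) x = κ * expComb κ p 0 x := by
  simp only [deriv_expComb, expComb]; ring

theorem expComb_neg (x : ℝ) : expComb κ p q (-x) = expComb κ q p x := by
  simp only [expComb, mul_neg, neg_neg]; ring

theorem solvesEigenEqAt_of_eqOn {ψ : ℝ → ℝ} {U : Set ℝ} {x : ℝ} (hU : IsOpen U)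
    (h : EqOn ψ (expComb κ p q) U) (hx : x ∈ U) : SolvesEigenEqAt κ ψ x := by
  have hψ : ψ =ᶠ[𝓝 x] expComb κ p q := h.eventuallyEq_of_mem (hU.mem_nhds hx)
  have hψ' : deriv ψ =ᶠ[𝓝 x] expComb κ (κ * p) (-(κ * q)) := deriv_expComb (κ := κ) ▸ hψ.deriv
  refine ⟨hψ.differentiableAt_iff.2 (hasDerivAt_expComb x).differentiableAt,
    hψ'.differentiableAt_iff.2 (hasDerivAt_expComb x).differentiableAt, ?_⟩
  rw [hψ'.deriv_eq, deriv_expComb, h hx]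
  simp only [expComb]
  ring

theorem eq_zero_of_eventually_abs_expComb_le_atTop (hκ : 0 < κ) {C : ℝ}
    (h : ∀ᶠ x in atTop, |expComb κ p q x| ≤ C) : p = 0 := by
  have hdecay : Tendsto (fun x => exp (-(κ * x))) atTop (𝓝 0) :=
    tendsto_exp_neg_atTop_nhds_zero.comp (tendsto_id.const_mul_atTop hκ)
  have hzero : Tendsto (fun x => exp (-(κ * x)) * expComb κ p q x) atTop (𝓝 0) := by
    refine squeeze_zero_norm' ?_ (hdecay.mul_const C |>.trans (by rw [zero_mul]))
    filter_upwards [h] with x hx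
    rw [norm_mul, Real.norm_of_nonneg (exp_pos _).le, Real.norm_eq_abs]
    exact mul_le_mul_of_nonneg_left hx (exp_pos _).le
  have hp : Tendsto (fun x => exp (-(κ * x)) * expComb κ p q x) atTop (𝓝 p) := by
    have hform : (fun x => exp (-(κ * x)) * expComb κ p q x) =
        fun x => p + q * exp (-(κ * x)) ^ 2 := by
      ext x
      simp only [expComb, exp_neg]
      field_simp
    simpa [hform] using (hdecay.pow 2).const_mul q |>.const_add p
  exact tendsto_nhds_unique hp hzero

theorem eq_zero_of_eventually_abs_expComb_le_atBot (hκ : 0 < κ) {C : ℝ}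
    (h : ∀ᶠ x in atBot, |expComb κ p q x| ≤ C) : q = 0 :=
  eq_zero_of_eventually_abs_expComb_le_atTop (p := q) (q := p) hκ <|
    (tendsto_neg_atTop_atBot.eventually h).mono fun x hx => by rwa [expComb_neg] at hx

end ExpComb

theorem hasDerivAt_exp_mul_deriv_add {κ s x : ℝ} {ψ : ℝ → ℝ} (hψ : SolvesEigenEqAt κ ψ x)
    (hs : s ^ 2 = κ ^ 2) :
    HasDerivAt (fun y => exp (-(s * y)) * (deriv ψ y + s * ψ y)) 0 x := by
  obtain ⟨h₁, h₂, h₃⟩ := hψ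
  have hlin : HasDerivAt (fun y => -(s * y)) (-s) x :=
    ((hasDerivAt_id x).const_mul s).neg.congr_deriv (by ring)
  refine (hlin.exp.mul (h₂.hasDerivAt.add (h₁.hasDerivAt.const_mul s))).congr_deriv ?_
  rw [Pi.add_apply, h₃, ← hs]
  ring

theorem exists_eqOn_expComb {κ : ℝ} (hκ : κ ≠ 0) {ψ : ℝ → ℝ} {U : Set ℝ} (hU : IsOpen U)
    (hU' : IsPreconnected U) (hψ : ContinuousOn ψ (closure U))
    (hode : ∀ x ∈ U, SolvesEigenEqAt κ ψ x) :
    ∃ p q, EqOn ψ (expComb κ p q) (closure U) := by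
  have hconst : ∀ s, s ^ 2 = κ ^ 2 →
      ∃ c, ∀ x ∈ U, exp (-(s * x)) * (deriv ψ x + s * ψ x) = c := fun s hs =>
    hU.exists_is_const_of_deriv_eq_zero hU'
      (fun x hx => (hasDerivAt_exp_mul_deriv_add (hode x hx) hs).differentiableAt
        |>.differentiableWithinAt)
      (fun x hx => (hasDerivAt_exp_mul_deriv_add (hode x hx) hs).deriv)
  obtain ⟨c₁, hc₁⟩ := hconst κ rfl
  obtain ⟨c₂, hc₂⟩ := hconst (-κ) (neg_sq κ)
  refine ⟨c₁ / (2 * κ), -c₂ / (2 * κ), EqOn.of_subset_closure (fun x hx => ?_) hψ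
    continuous_expComb.continuousOn subset_closure subset_rfl⟩
  have h₁ := hc₁ x hx
  have h₂ := hc₂ x hx
  simp only [neg_mul, neg_neg] at h₂
  simp only [expComb]
  field_simp
  linear_combination exp (κ * x) * h₁ - exp (-(κ * x)) * h₂ - (2 * κ * ψ x) * exp_mul_exp_neg (κ * x)

theorem exists_eqOn_Ici_of_bounded {κ c C : ℝ} (hκ : 0 < κ) {ψ : ℝ → ℝ}
    (hψ : ContinuousOn ψ (Ici c)) (hC : ∀ x, |ψ x| ≤ C)
    (hode : ∀ x, c < x → SolvesEigenEqAt κ ψ x) :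
    ∃ q, EqOn ψ (expComb κ 0 q) (Ici c) := by
  obtain ⟨p, q, hpq⟩ := exists_eqOn_expComb hκ.ne' isOpen_Ioi isPreconnected_Ioi
    (by rwa [closure_Ioi]) hode
  rw [closure_Ioi] at hpq
  obtain rfl : p = 0 := eq_zero_of_eventually_abs_expComb_le_atTop hκ <|
    (eventually_ge_atTop c).mono fun x hx => hpq hx ▸ hC x
  exact ⟨q, hpq⟩

theorem exists_eqOn_Iic_of_bounded {κ c C : ℝ} (hκ : 0 < κ) {ψ : ℝ → ℝ}
    (hψ : ContinuousOn ψ (Iic c)) (hC : ∀ x, |ψ x| ≤ C)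
    (hode : ∀ x, x < c → SolvesEigenEqAt κ ψ x) :
    ∃ p, EqOn ψ (expComb κ p 0) (Iic c) := by
  obtain ⟨p, q, hpq⟩ := exists_eqOn_expComb hκ.ne' isOpen_Iio isPreconnected_Iio
    (by rwa [closure_Iio]) hode
  rw [closure_Iio] at hpq
  obtain rfl : q = 0 := eq_zero_of_eventually_abs_expComb_le_atBot hκ <|
    (eventually_le_atBot c).mono fun x hx => hpq hx ▸ hC x
  exact ⟨p, hpq⟩

theorem tendsto_deriv_of_eqOn {f g : ℝ → ℝ} {U s : Set ℝ} {c : ℝ} (hU : IsOpen U)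
    (h : EqOn f g U) (hUs : U ∈ 𝓝[s] c) (hg : ContinuousAt (deriv g) c) :
    Tendsto (deriv f) (𝓝[s] c) (𝓝 (deriv g c)) :=
  (hg.tendsto.mono_left nhdsWithin_le_nhds).congr' <| mem_of_superset hUs fun _ hx =>
    ((h.eventuallyEq_of_mem (hU.mem_nhds hx)).deriv_eq).symm

/-- `max (-a) (min a x)` is the point of `[-a, a]` nearest to `x`, and `max 0 (|x| - a)` the
distance from `x` to `[-a, a]`. -/
noncomputable def decayExt (κ a : ℝ) (φ : ℝ → ℝ) (x : ℝ) : ℝ :=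
  φ (max (-a) (min a x)) * exp (-(κ * max 0 (|x| - a)))

section DecayExt

variable {κ a : ℝ} {φ : ℝ → ℝ}

theorem max_neg_min_mem_Icc (ha : 0 ≤ a) (x : ℝ) : max (-a) (min a x) ∈ Icc (-a) a :=
  ⟨le_max_left _ _, max_le (by linarith) (min_le_left _ _)⟩

theorem decayExt_eqOn_Icc : EqOn (decayExt κ a φ) φ (Icc (-a) a) := by
  intro x hx
  have hxa : |x| - a ≤ 0 := sub_nonpos.2 (abs_le.2 hx)
  simp [decayExt, min_eq_right hx.2, max_eq_right hx.1, max_eq_left hxa]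

theorem decayExt_eqOn_Ici (ha : 0 ≤ a) :
    EqOn (decayExt κ a φ) (expComb κ 0 (φ a * exp (κ * a))) (Ici a) := by
  intro x (hx : a ≤ x)
  rw [decayExt, expComb, min_eq_left hx, max_eq_right (by linarith), abs_of_nonneg (by linarith),
    max_eq_right (by linarith), mul_assoc, ← exp_add]
  ring_nf

theorem decayExt_eqOn_Iic (ha : 0 ≤ a) :
    EqOn (decayExt κ a φ) (expComb κ (φ (-a) * exp (κ * a)) 0) (Iic (-a)) := by
  intro x (hx : x ≤ -a)
  rw [decayExt, expComb, min_eq_right (by linarith), max_eq_left hx, abs_of_nonpos (by linarith),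
    max_eq_right (by linarith), mul_assoc, ← exp_add]
  ring_nf

theorem decayExt_congr {φ' : ℝ → ℝ} (ha : 0 ≤ a) (h : EqOn φ φ' (Icc (-a) a)) :
    decayExt κ a φ = decayExt κ a φ' :=
  funext fun x => by rw [decayExt, decayExt, h (max_neg_min_mem_Icc ha x)]

theorem Continuous.decayExt (hφ : Continuous φ) : Continuous (decayExt κ a φ) := by
  unfold _root_.decayExt; fun_prop

theorem exists_abs_decayExt_le (hκ : 0 ≤ κ) (ha : 0 ≤ a) (hφ : ContinuousOn φ (Icc (-a) a)) :
    ∃ C, ∀ x, |decayExt κ a φ x| ≤ C := by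
  obtain ⟨C, hC⟩ := isCompact_Icc.exists_bound_of_continuousOn hφ
  refine ⟨C, fun x => ?_⟩
  have hexp : exp (-(κ * max 0 (|x| - a))) ≤ 1 :=
    exp_le_one_iff.2 (neg_nonpos.2 (mul_nonneg hκ (le_max_left _ _)))
  rw [decayExt, abs_mul, abs_of_pos (exp_pos _)]
  calc |φ (max (-a) (min a x))| * exp (-(κ * max 0 (|x| - a)))
      ≤ C * 1 := mul_le_mul (hC _ (max_neg_min_mem_Icc ha x)) hexp (exp_pos _).le
        ((abs_nonneg _).trans (hC (-a) ⟨le_rfl, by linarith⟩))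
    _ = C := mul_one C

theorem tendsto_deriv_decayExt (ha : 0 < a) (hφ : Continuous (deriv φ)) :
    Tendsto (deriv (decayExt κ a φ)) (𝓝[>] a) (𝓝 (-κ * φ a)) ∧
      Tendsto (deriv (decayExt κ a φ)) (𝓝[<] a) (𝓝 (deriv φ a)) ∧
      Tendsto (deriv (decayExt κ a φ)) (𝓝[>] (-a)) (𝓝 (deriv φ (-a))) ∧
      Tendsto (deriv (decayExt κ a φ)) (𝓝[<] (-a)) (𝓝 (κ * φ (-a))) := by
  have hR := decayExt_eqOn_Ici (κ := κ) (φ := φ) ha.le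
  have hL := decayExt_eqOn_Iic (κ := κ) (φ := φ) ha.le
  have hI := (decayExt_eqOn_Icc (κ := κ) (φ := φ) (a := a)).mono Ioo_subset_Icc_self
  have hφa : φ a = expComb κ 0 (φ a * exp (κ * a)) a :=
    (decayExt_eqOn_Icc ⟨by linarith, le_rfl⟩).symm.trans (hR self_mem_Ici)
  have hφa' : φ (-a) = expComb κ (φ (-a) * exp (κ * a)) 0 (-a) :=
    (decayExt_eqOn_Icc ⟨le_rfl, by linarith⟩).symm.trans (hL self_mem_Iic)
  refine ⟨?_, tendsto_deriv_of_eqOn isOpen_Ioo hI (Ioo_mem_nhdsLT (by linarith)) hφ.continuousAt,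
    tendsto_deriv_of_eqOn isOpen_Ioo hI (Ioo_mem_nhdsGT (by linarith)) hφ.continuousAt, ?_⟩
  · rw [hφa, ← deriv_expComb_zero_left]
    exact tendsto_deriv_of_eqOn isOpen_Ioi (hR.mono Ioi_subset_Ici_self) self_mem_nhdsWithin
      continuous_deriv_expComb.continuousAt
  · rw [hφa', ← deriv_expComb_zero_right]
    exact tendsto_deriv_of_eqOn isOpen_Iio (hL.mono Iio_subset_Iic_self) self_mem_nhdsWithin
      continuous_deriv_expComb.continuousAt

end DecayExt

theorem eq_decayExt_of_bounded_solution {a κ C : ℝ} {ψ : ℝ → ℝ} (ha : 0 < a) (hκ : 0 < κ)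
    (hψ : Continuous ψ) (hC : ∀ x, |ψ x| ≤ C)
    (hode : ∀ x, x ≠ -a → x ≠ a → SolvesEigenEqAt κ ψ x) :
    ∃ p q, ψ = decayExt κ a (expComb κ p q) := by
  obtain ⟨B, hB⟩ := exists_eqOn_Ici_of_bounded hκ hψ.continuousOn hC fun x hx =>
    hode x (by linarith) hx.ne'
  obtain ⟨A, hA⟩ := exists_eqOn_Iic_of_bounded hκ hψ.continuousOn hC fun x hx =>
    hode x hx.ne (by linarith)
  obtain ⟨p, q, hpq⟩ := exists_eqOn_expComb hκ.ne' isOpen_Ioo isPreconnected_Ioo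
    hψ.continuousOn fun x hx => hode x hx.1.ne' hx.2.ne
  rw [closure_Ioo (by linarith)] at hpq
  have hB' : B = ψ a * exp (κ * a) := by
    rw [hB self_mem_Ici, expComb]
    linear_combination -B * exp_mul_exp_neg (κ * a)
  have hA' : A = ψ (-a) * exp (κ * a) := by
    rw [hA self_mem_Iic, expComb, mul_neg, neg_neg]
    linear_combination -A * exp_mul_exp_neg (κ * a)
  refine ⟨p, q, decayExt_congr ha.le hpq ▸ funext fun x => ?_⟩
  rcases le_or_gt x (-a) with hx | hx
  · rw [hA hx, decayExt_eqOn_Iic ha.le hx, hA']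
  rcases le_or_gt x a with hx' | hx'
  · rw [decayExt_eqOn_Icc ⟨hx.le, hx'⟩]
  · rw [hB hx'.le, decayExt_eqOn_Ici ha.le hx'.le, hB']

theorem exists_robin_expComb_iff (α a κ : ℝ) :
    (∃ p q : ℝ, (p, q) ≠ 0 ∧ deriv (expComb κ p q) a = (α - κ) * expComb κ p q a ∧
      deriv (expComb κ p q) (-a) = (κ - α) * expComb κ p q (-a)) ↔
    (α ^ 2 / 4) * exp (-4 * κ * a) = (κ - α / 2) ^ 2 := by
  have hF4 : exp (-4 * κ * a) = exp (-(κ * a)) ^ 4 := by rw [← exp_nat_mul]; ring_nf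
  have hEF := exp_mul_exp_neg (κ * a)
  simp only [deriv_expComb, expComb, mul_neg, neg_neg, hF4]
  generalize exp (κ * a) = E, exp (-(κ * a)) = F at hEF ⊢
  constructor
  · rintro ⟨p, q, hpq, h₁, h₂⟩
    have hdet : (2 * κ - α) ^ 2 * E ^ 2 - α ^ 2 * F ^ 2 = 0 := by
      by_contra hdet
      refine hpq (Prod.ext ?_ ?_)
      · refine (mul_eq_zero.1 ?_).resolve_left hdet
        linear_combination ((2 * κ - α) * E) * h₁ - (α * F) * h₂
      · refine (mul_eq_zero.1 ?_).resolve_left hdet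
        linear_combination (α * F) * h₁ - ((2 * κ - α) * E) * h₂
    linear_combination (-F ^ 2 / 4) * hdet + ((2 * κ - α) ^ 2 / 4 * (E * F + 1)) * hEF
  · intro h
    have hfactor : ((2 * κ - α) - α * F ^ 2) * ((2 * κ - α) + α * F ^ 2) = 0 := by
      linear_combination (-4) * h
    rcases mul_eq_zero.1 hfactor with h' | h'
    · refine ⟨1, 1, by simp, ?_, ?_⟩
      · linear_combination E * h' + α * F * hEF
      · linear_combination -E * h' - α * F * hEF
    · refine ⟨1, -1, by simp, ?_, ?_⟩
      · linear_combination E * h' - α * F * hEF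
      · linear_combination E * h' - α * F * hEF

theorem expComb_ne_zero_or {κ a p q : ℝ} (hκa : κ * a ≠ 0) (hpq : (p, q) ≠ 0) :
    expComb κ p q a ≠ 0 ∨ expComb κ p q (-a) ≠ 0 := by
  by_contra! h
  obtain ⟨h₁, h₂⟩ := h
  have hEF : exp (κ * a) ≠ exp (-(κ * a)) := fun h => hκa (by linarith [exp_injective h])
  have hsq : exp (κ * a) ^ 2 - exp (-(κ * a)) ^ 2 ≠ 0 := by
    rw [sq_sub_sq]
    exact mul_ne_zero (by positivity) (sub_ne_zero.2 hEF)
  simp only [expComb, mul_neg, neg_neg] at h₁ h₂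
  refine hpq (Prod.ext ?_ ?_)
  · refine (mul_eq_zero.1 ?_).resolve_left hsq
    linear_combination exp (κ * a) * h₁ - exp (-(κ * a)) * h₂
  · refine (mul_eq_zero.1 ?_).resolve_left hsq
    linear_combination exp (κ * a) * h₂ - exp (-(κ * a)) * h₁

def IsTwoDeltaEigenfunction (α a κ : ℝ) (ψ : ℝ → ℝ) : Prop :=
  ψ ≠ 0 ∧ Continuous ψ ∧ (∃ C : ℝ, ∀ x : ℝ, |ψ x| ≤ C) ∧
    (∀ x : ℝ, x ≠ -a → x ≠ a → SolvesEigenEqAt κ ψ x) ∧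
    ∃ Lpa Lma Lpb Lmb : ℝ,
      Tendsto (deriv ψ) (𝓝[>] a) (𝓝 Lpa) ∧ Tendsto (deriv ψ) (𝓝[<] a) (𝓝 Lma) ∧
      Tendsto (deriv ψ) (𝓝[>] (-a)) (𝓝 Lpb) ∧ Tendsto (deriv ψ) (𝓝[<] (-a)) (𝓝 Lmb) ∧
      Lpa - Lma = -α * ψ a ∧ Lpb - Lmb = -α * ψ (-a)

theorem IsTwoDeltaEigenfunction.exists_robin {α a κ : ℝ} {ψ : ℝ → ℝ} (ha : 0 < a) (hκ : 0 < κ)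
    (hψ : IsTwoDeltaEigenfunction α a κ ψ) :
    ∃ p q : ℝ, (p, q) ≠ 0 ∧ deriv (expComb κ p q) a = (α - κ) * expComb κ p q a ∧
      deriv (expComb κ p q) (-a) = (κ - α) * expComb κ p q (-a) := by
  obtain ⟨hψ0, hψc, ⟨C, hC⟩, hode, Lpa, Lma, Lpb, Lmb, hpa, hma, hpb, hmb, hja, hjb⟩ := hψ
  obtain ⟨p, q, rfl⟩ := eq_decayExt_of_bounded_solution ha hκ hψc hC hode
  obtain ⟨hpa', hma', hpb', hmb'⟩ := tendsto_deriv_decayExt (κ := κ) ha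
    (continuous_deriv_expComb (κ := κ) (p := p) (q := q))
  rw [decayExt_eqOn_Icc ⟨by linarith, le_rfl⟩] at hja
  rw [decayExt_eqOn_Icc ⟨le_rfl, by linarith⟩] at hjb
  refine ⟨p, q, fun hpq => hψ0 ?_, ?_, ?_⟩
  · obtain ⟨rfl, rfl⟩ := Prod.mk_eq_zero.1 hpq
    ext x
    simp [decayExt, expComb]
  · linear_combination tendsto_nhds_unique hpa hpa' - tendsto_nhds_unique hma hma' - hja
  · linear_combination tendsto_nhds_unique hmb hmb' - tendsto_nhds_unique hpb hpb' + hjb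

theorem isTwoDeltaEigenfunction_decayExt {α a κ p q : ℝ} (ha : 0 < a) (hκ : 0 < κ)
    (hpq : (p, q) ≠ 0) (h₁ : deriv (expComb κ p q) a = (α - κ) * expComb κ p q a)
    (h₂ : deriv (expComb κ p q) (-a) = (κ - α) * expComb κ p q (-a)) :
    IsTwoDeltaEigenfunction α a κ (decayExt κ a (expComb κ p q)) := by
  have hI : EqOn (decayExt κ a (expComb κ p q)) (expComb κ p q) (Icc (-a) a) := decayExt_eqOn_Icc
  have ha_mem : a ∈ Icc (-a) a := ⟨by linarith, le_rfl⟩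
  have ha_mem' : -a ∈ Icc (-a) a := ⟨le_rfl, by linarith⟩
  obtain ⟨hpa, hma, hpb, hmb⟩ := tendsto_deriv_decayExt (κ := κ) ha
    (continuous_deriv_expComb (κ := κ) (p := p) (q := q))
  refine ⟨?_, continuous_expComb.decayExt,
    exists_abs_decayExt_le hκ.le ha.le continuous_expComb.continuousOn, ?_,
    _, _, _, _, hpa, hma, hpb, hmb, ?_, ?_⟩
  · intro h0
    rcases expComb_ne_zero_or (mul_pos hκ ha).ne' hpq with h | h
    · exact h (by rw [← hI ha_mem, h0, Pi.zero_apply])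
    · exact h (by rw [← hI ha_mem', h0, Pi.zero_apply])
  · intro x hxa hxa'
    rcases hxa.lt_or_gt with hx | hx
    · exact solvesEigenEqAt_of_eqOn isOpen_Iio
        ((decayExt_eqOn_Iic ha.le).mono Iio_subset_Iic_self) hx
    rcases hxa'.lt_or_gt with hx' | hx'
    · exact solvesEigenEqAt_of_eqOn isOpen_Ioo (hI.mono Ioo_subset_Icc_self) ⟨hx, hx'⟩
    · exact solvesEigenEqAt_of_eqOn isOpen_Ioi
        ((decayExt_eqOn_Ici ha.le).mono Ioi_subset_Ici_self) hx'
  · rw [h₁, hI ha_mem]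
    ring
  · rw [h₂, hI ha_mem']
    ring

theorem delta_eigenvalue_characterization_general
    (α a κ : ℝ) (ha : 0 < a) (hκ : 0 < κ) :
    (∃ ψ : ℝ → ℝ,
      ψ ≠ 0 ∧
      Continuous ψ ∧
      (∃ C : ℝ, ∀ x : ℝ, |ψ x| ≤ C) ∧
      (∀ x : ℝ, x ≠ -a → x ≠ a →
        DifferentiableAt ℝ ψ x ∧ DifferentiableAt ℝ (deriv ψ) x ∧
        deriv (deriv ψ) x = κ ^ 2 * ψ x) ∧
      (∃ Lpa Lma Lpb Lmb : ℝ,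
        Tendsto (deriv ψ) (𝓝[>] a) (𝓝 Lpa) ∧
        Tendsto (deriv ψ) (𝓝[<] a) (𝓝 Lma) ∧
        Tendsto (deriv ψ) (𝓝[>] (-a)) (𝓝 Lpb) ∧
        Tendsto (deriv ψ) (𝓝[<] (-a)) (𝓝 Lmb) ∧
        Lpa - Lma = -α * ψ a ∧
        Lpb - Lmb = -α * ψ (-a)))
    ↔ (α ^ 2 / 4) * Real.exp (-4 * κ * a) = (κ - α / 2) ^ 2 := by
  change (∃ ψ, IsTwoDeltaEigenfunction α a κ ψ) ↔ _
  rw [← exists_robin_expComb_iff]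
  constructor
  · rintro ⟨ψ, hψ⟩
    exact hψ.exists_robin ha hκ
  · rintro ⟨p, q, hpq, h₁, h₂⟩
    exact ⟨_, isTwoDeltaEigenfunction_decayExt ha hκ hpq h₁ h₂⟩

/-- `−κ²` is an eigenvalue of the one-dimensional Schrödinger
operator with two attractive delta interactions of strength `α` at `±a`
if and only if `(α²/4)·exp(−4κa) = (κ − α/2)²`. -/
theorem delta_eigenvalue_characterization
    (α a κ : ℝ) (hα : 0 < α) (ha : 0 < a) (hκ : 0 < κ) :
    (∃ ψ : ℝ → ℝ,
      ψ ≠ 0 ∧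
      Continuous ψ ∧
      (∃ C : ℝ, ∀ x : ℝ, |ψ x| ≤ C) ∧
      (∀ x : ℝ, x ≠ -a → x ≠ a →
        DifferentiableAt ℝ ψ x ∧ DifferentiableAt ℝ (deriv ψ) x ∧
        deriv (deriv ψ) x = κ ^ 2 * ψ x) ∧
      (∃ Lpa Lma Lpb Lmb : ℝ,
        Tendsto (deriv ψ) (𝓝[>] a) (𝓝 Lpa) ∧
        Tendsto (deriv ψ) (𝓝[<] a) (𝓝 Lma) ∧
        Tendsto (deriv ψ) (𝓝[>] (-a)) (𝓝 Lpb) ∧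
        Tendsto (deriv ψ) (𝓝[<] (-a)) (𝓝 Lmb) ∧
        Lpa - Lma = -α * ψ a ∧
        Lpb - Lmb = -α * ψ (-a)))
    ↔ (α ^ 2 / 4) * Real.exp (-4 * κ * a) = (κ - α / 2) ^ 2 :=
  delta_eigenvalue_characterization_general α a κ ha hκ
end

section
/- Let α > 0 and a > 0 with αa > 1, let κ₁ be the unique solution in (0, α/2) of (α/2)·exp(−2κa) = α/2 − κ, and set ξ₁ := −κ₁². Define φ₁ : ℝ → ℝ by φ₁(x) := sinh(κ₁ x) for |x| ≤ a and φ₁(x) := sign(x)·sinh(κ₁ a)·exp(−κ₁(|x| − a)) for |x| > a. Then φ₁ is continuous, odd (in particular φ₁(0) = 0), bounded and square-integrable, twice differentiable at every x ∉ {−a, a} with −φ₁''(x) = ξ₁ φ₁(x) there, its derivative has one-sided limits at ±a, and φ₁'(a+0) − φ₁'(a−0) = −αφ₁(a) and φ₁'(−a+0) − φ₁'(−a−0) = −αφ₁(−a). -/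
/-!
On `(-a, a)` the function is `sinh (κ₁ x)` and outside it is a decaying exponential; both
solve `φ'' = κ₁² φ`, and the pieces agree at `±a`. The derivative jumps at `a` by
`-κ₁ (cosh + sinh) (κ₁ a) = -κ₁ exp (κ₁ a)`, and this equals `-α sinh (κ₁ a)` precisely
because `κ₁` solves `(α/2) exp (-2κ₁a) = α/2 - κ₁`. By symmetry the jump at `-a` and
`φ₁ (-a)` are the negatives of the jump at `a` and `φ₁ a`.
-/

open Filter Topology MeasureTheory

open Real Set

theorem integrable_exp_neg_mul_abs {b : ℝ} (hb : 0 < b) :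
    Integrable (fun x : ℝ => exp (-b * |x|)) := by
  have hIic : IntegrableOn (fun x : ℝ => exp (-b * |x|)) (Iic 0) :=
    (integrableOn_exp_mul_Iic hb 0).congr_fun
      (fun x (hx : x ≤ 0) => by rw [abs_of_nonpos hx]; ring_nf) measurableSet_Iic
  have hIoi : IntegrableOn (fun x : ℝ => exp (-b * |x|)) (Ioi 0) :=
    (integrableOn_exp_mul_Ioi (neg_lt_zero.2 hb) 0).congr_fun
      (fun x (hx : 0 < x) => by rw [abs_of_pos hx]) measurableSet_Ioi
  simpa [Iic_union_Ioi] using hIic.union hIoi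

theorem Filter.EventuallyEq.deriv_deriv_eq_mul {f g g' : ℝ → ℝ} {x c : ℝ}
    (hfg : f =ᶠ[𝓝 x] g) (hg : ∀ y, HasDerivAt g (g' y) y)
    (hg' : ∀ y, HasDerivAt g' (c * g y) y) :
    DifferentiableAt ℝ f x ∧ DifferentiableAt ℝ (deriv f) x ∧
      deriv (deriv f) x = c * f x := by
  have hderiv : deriv f =ᶠ[𝓝 x] g' := hfg.deriv.trans (.of_eq (funext fun y => (hg y).deriv))
  exact ⟨(hg x).differentiableAt.congr_of_eventuallyEq hfg,
    (hg' x).differentiableAt.congr_of_eventuallyEq hderiv,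
    by rw [hderiv.deriv_eq, (hg' x).deriv, hfg.eq_of_nhds]⟩

theorem tendsto_deriv_of_eventually_eventuallyEq {f g g' : ℝ → ℝ} {l : Filter ℝ} {x : ℝ}
    (hl : l ≤ 𝓝 x) (hfg : ∀ᶠ y in l, f =ᶠ[𝓝 y] g) (hg : ∀ y, HasDerivAt g (g' y) y)
    (hg' : ContinuousAt g' x) : Tendsto (deriv f) l (𝓝 (g' x)) :=
  (hg'.tendsto.mono_left hl).congr' (hfg.mono fun y hy => (hy.deriv_eq.trans (hg y).deriv).symm)

theorem hasDerivAt_sinh_mul (κ y : ℝ) :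
    HasDerivAt (fun z => sinh (κ * z)) (κ * cosh (κ * y)) y := by
  simpa [mul_comm] using ((hasDerivAt_id y).const_mul κ).sinh

theorem hasDerivAt_mul_cosh_mul (κ y : ℝ) :
    HasDerivAt (fun z => κ * cosh (κ * z)) (κ ^ 2 * sinh (κ * y)) y :=
  (((hasDerivAt_id y).const_mul κ).cosh.const_mul κ).congr_deriv (by simp only [id_eq]; ring)

theorem hasDerivAt_mul_exp_mul_sub (c r b y : ℝ) :
    HasDerivAt (fun z => c * exp (r * (z - b))) (r * (c * exp (r * (y - b)))) y :=
  ((((hasDerivAt_id y).sub_const b).const_mul r).exp.const_mul c).congr_deriv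
    (by simp only [id_eq]; ring)

theorem mul_exp_eq_mul_sinh_of_secular {α κ a : ℝ}
    (h : α / 2 * exp (-2 * κ * a) = α / 2 - κ) : κ * exp (κ * a) = α * sinh (κ * a) := by
  have hexp : exp (-(κ * a)) = exp (-2 * κ * a) * exp (κ * a) := by rw [← exp_add]; ring_nf
  rw [sinh_eq, hexp]
  linear_combination exp (κ * a) * h

noncomputable def excitedState (κ a x : ℝ) : ℝ :=
  if |x| ≤ a then sinh (κ * x)
  else (if 0 < x then (1 : ℝ) else -1) * sinh (κ * a) * exp (-κ * (|x| - a))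

section excitedState

variable {κ a x : ℝ}

theorem excitedState_neg (ha : 0 ≤ a) (x : ℝ) :
    excitedState κ a (-x) = -excitedState κ a x := by
  unfold excitedState
  rw [abs_neg]
  split_ifs with h hneg hpos hpos
  · rw [mul_neg, sinh_neg]
  · linarith
  · ring
  · ring
  · have : x = 0 := by linarith
    simp only [this, abs_zero] at h
    linarith

theorem excitedState_of_abs_le (h : |x| ≤ a) : excitedState κ a x = sinh (κ * x) := if_pos h

-- The branch-free form from which continuity and the bounds are read off.
theorem excitedState_eq_sinh_clamp_mul_exp (ha : 0 ≤ a) (x : ℝ) :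
    excitedState κ a x = sinh (κ * max (min x a) (-a)) * exp (-κ * (max |x| a - a)) := by
  rcases le_or_gt |x| a with h | h
  · obtain ⟨h₁, h₂⟩ := abs_le.1 h
    rw [excitedState_of_abs_le h, min_eq_left h₂, max_eq_left h₁, max_eq_right h]
    simp
  · unfold excitedState
    rw [if_neg h.not_ge, max_eq_left h.le]
    rcases lt_or_ge 0 x with hx | hx
    · rw [abs_of_pos hx] at h ⊢
      rw [if_pos hx, min_eq_right h.le, max_eq_left (by linarith), one_mul]
    · rw [abs_of_nonpos hx] at h ⊢
      rw [if_neg hx.not_gt, min_eq_left (by linarith), max_eq_right (by linarith), mul_neg,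
        sinh_neg]
      ring

theorem excitedState_zero (ha : 0 ≤ a) : excitedState κ a 0 = 0 := by
  simp [excitedState_of_abs_le (x := 0) (by simpa using ha)]

theorem excitedState_self (ha : 0 ≤ a) : excitedState κ a a = sinh (κ * a) :=
  excitedState_of_abs_le (abs_of_nonneg ha).le

theorem continuous_excitedState (ha : 0 ≤ a) : Continuous (excitedState κ a) := by
  simp_rw [funext (excitedState_eq_sinh_clamp_mul_exp (κ := κ) ha)]
  fun_prop

theorem abs_excitedState_le (hκ : 0 ≤ κ) (ha : 0 ≤ a) (x : ℝ) :
    |excitedState κ a x| ≤ sinh (κ * a) * exp (-κ * (max |x| a - a)) := by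
  rw [excitedState_eq_sinh_clamp_mul_exp ha, abs_mul, abs_exp, abs_sinh, abs_mul,
    abs_of_nonneg hκ]
  refine mul_le_mul_of_nonneg_right (sinh_le_sinh.2 (mul_le_mul_of_nonneg_left ?_ hκ))
    (exp_pos _).le
  exact abs_le.2 ⟨le_max_right _ _, max_le (min_le_right x a) (neg_le_self ha)⟩

theorem abs_excitedState_le_sinh (hκ : 0 ≤ κ) (ha : 0 ≤ a) (x : ℝ) :
    |excitedState κ a x| ≤ sinh (κ * a) := by
  refine (abs_excitedState_le hκ ha x).trans (mul_le_of_le_one_right ?_ ?_)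
  · exact sinh_nonneg_iff.2 (mul_nonneg hκ ha)
  · exact exp_le_one_iff.2 (by nlinarith [le_max_right |x| a])

theorem integrable_excitedState (hκ : 0 < κ) (ha : 0 ≤ a) : Integrable (excitedState κ a) := by
  refine ((integrable_exp_neg_mul_abs hκ).const_mul (sinh (κ * a) * exp (κ * a))).mono'
    (continuous_excitedState ha).aestronglyMeasurable (ae_of_all _ fun x => ?_)
  calc ‖excitedState κ a x‖ ≤ sinh (κ * a) * exp (-κ * (max |x| a - a)) :=
        abs_excitedState_le hκ.le ha x
    _ ≤ sinh (κ * a) * exp (-κ * (|x| - a)) := by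
        refine mul_le_mul_of_nonneg_left (exp_le_exp.2 ?_)
          (sinh_nonneg_iff.2 (mul_nonneg hκ.le ha))
        nlinarith [mul_nonneg hκ.le (sub_nonneg.2 (le_max_left |x| a))]
    _ = sinh (κ * a) * exp (κ * a) * exp (-κ * |x|) := by
        rw [mul_assoc, ← exp_add]; ring_nf

theorem integrable_excitedState_sq (hκ : 0 < κ) (ha : 0 ≤ a) :
    Integrable (fun x => excitedState κ a x ^ 2) := by
  simp_rw [sq]
  exact (integrable_excitedState hκ ha).bdd_mul (continuous_excitedState ha).aestronglyMeasurable
    (ae_of_all _ (abs_excitedState_le_sinh hκ.le ha))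

theorem excitedState_eventuallyEq_sinh (hx : |x| < a) :
    excitedState κ a =ᶠ[𝓝 x] fun z => sinh (κ * z) := by
  filter_upwards [(isOpen_Iio.preimage continuous_abs).mem_nhds hx] with y hy
  exact excitedState_of_abs_le (le_of_lt hy)

theorem excitedState_eventuallyEq_of_lt (ha : 0 ≤ a) (hx : a < x) :
    excitedState κ a =ᶠ[𝓝 x] fun z => sinh (κ * a) * exp (-κ * (z - a)) := by
  filter_upwards [isOpen_Ioi.mem_nhds hx] with y (hy : a < y)
  have hy₀ : 0 < y := ha.trans_lt hy
  rw [excitedState, abs_of_pos hy₀, if_neg hy.not_ge, if_pos hy₀, one_mul]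

theorem excitedState_eventuallyEq_of_lt_neg (ha : 0 ≤ a) (hx : x < -a) :
    excitedState κ a =ᶠ[𝓝 x] fun z => -sinh (κ * a) * exp (κ * (z - -a)) := by
  filter_upwards [isOpen_Iio.mem_nhds hx] with y (hy : y < -a)
  have hy₀ : y < 0 := hy.trans_le (neg_nonpos.2 ha)
  rw [excitedState, abs_of_neg hy₀, if_neg (by linarith), if_neg hy₀.not_gt]
  ring_nf

theorem excitedState_deriv_deriv (ha : 0 ≤ a) (hxa : x ≠ a) (hxa' : x ≠ -a) :
    DifferentiableAt ℝ (excitedState κ a) x ∧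
      DifferentiableAt ℝ (deriv (excitedState κ a)) x ∧
      deriv (deriv (excitedState κ a)) x = κ ^ 2 * excitedState κ a x := by
  rcases lt_or_gt_of_ne hxa with hlt | hgt
  · rcases lt_or_gt_of_ne hxa' with hlt' | hgt'
    · exact (excitedState_eventuallyEq_of_lt_neg ha hlt').deriv_deriv_eq_mul
        (hasDerivAt_mul_exp_mul_sub _ _ _)
        fun y => ((hasDerivAt_mul_exp_mul_sub _ _ _ y).const_mul κ).congr_deriv (by ring)
    · exact (excitedState_eventuallyEq_sinh (abs_lt.2 ⟨hgt', hlt⟩)).deriv_deriv_eq_mul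
        (hasDerivAt_sinh_mul κ) (hasDerivAt_mul_cosh_mul κ)
  · exact (excitedState_eventuallyEq_of_lt ha hgt).deriv_deriv_eq_mul
      (hasDerivAt_mul_exp_mul_sub _ _ _)
      fun y => ((hasDerivAt_mul_exp_mul_sub _ _ _ y).const_mul (-κ)).congr_deriv (by ring)

theorem tendsto_deriv_excitedState_nhdsGT (ha : 0 ≤ a) :
    Tendsto (deriv (excitedState κ a)) (𝓝[>] a) (𝓝 (-κ * sinh (κ * a))) := by
  simpa using tendsto_deriv_of_eventually_eventuallyEq (l := 𝓝[>] a) nhdsWithin_le_nhds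
    (eventually_nhdsWithin_of_forall fun _ hy =>
      excitedState_eventuallyEq_of_lt (κ := κ) ha hy)
    (hasDerivAt_mul_exp_mul_sub _ _ _) (by fun_prop)

theorem tendsto_deriv_excitedState_nhdsLT (ha : 0 < a) :
    Tendsto (deriv (excitedState κ a)) (𝓝[<] a) (𝓝 (κ * cosh (κ * a))) :=
  tendsto_deriv_of_eventually_eventuallyEq (x := a) nhdsWithin_le_nhds
    (mem_of_superset (Ioo_mem_nhdsLT (neg_lt_self ha)) fun _ hy =>
      excitedState_eventuallyEq_sinh (abs_lt.2 hy))
    (g' := fun y => κ * cosh (κ * y)) (hasDerivAt_sinh_mul κ) (by fun_prop)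

theorem tendsto_deriv_excitedState_nhdsGT_neg (ha : 0 < a) :
    Tendsto (deriv (excitedState κ a)) (𝓝[>] (-a)) (𝓝 (κ * cosh (κ * a))) := by
  simpa using tendsto_deriv_of_eventually_eventuallyEq (x := -a) nhdsWithin_le_nhds
    (mem_of_superset (Ioo_mem_nhdsGT (neg_lt_self ha)) fun _ hy =>
      excitedState_eventuallyEq_sinh (κ := κ) (abs_lt.2 hy))
    (hasDerivAt_sinh_mul κ) (by fun_prop)

theorem tendsto_deriv_excitedState_nhdsLT_neg (ha : 0 ≤ a) :
    Tendsto (deriv (excitedState κ a)) (𝓝[<] (-a)) (𝓝 (-κ * sinh (κ * a))) := by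
  simpa using tendsto_deriv_of_eventually_eventuallyEq (l := 𝓝[<] (-a)) nhdsWithin_le_nhds
    (eventually_nhdsWithin_of_forall fun _ hy =>
      excitedState_eventuallyEq_of_lt_neg (κ := κ) ha hy)
    (hasDerivAt_mul_exp_mul_sub _ _ _) (by fun_prop)

end excitedState

theorem excited_state_eigenfunction_general
    (α a κ₁ ξ₁ : ℝ) (ha : 0 < a)
    (hκ₁ : κ₁ ∈ Set.Ioo 0 (α / 2) ∧
      (α / 2) * Real.exp (-2 * κ₁ * a) = α / 2 - κ₁)
    (hξ₁ : ξ₁ = -κ₁ ^ 2)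
    (φ₁ : ℝ → ℝ)
    (hφ₁ : ∀ x : ℝ, φ₁ x =
      if |x| ≤ a then Real.sinh (κ₁ * x)
      else (if 0 < x then (1 : ℝ) else -1) *
        Real.sinh (κ₁ * a) * Real.exp (-κ₁ * (|x| - a))) :
    Continuous φ₁ ∧
    (∀ x : ℝ, φ₁ (-x) = -φ₁ x) ∧
    φ₁ 0 = 0 ∧
    (∃ C : ℝ, ∀ x : ℝ, |φ₁ x| ≤ C) ∧
    Integrable (fun x : ℝ => (φ₁ x) ^ 2) ∧
    (∀ x : ℝ, x ≠ -a → x ≠ a →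
      DifferentiableAt ℝ φ₁ x ∧ DifferentiableAt ℝ (deriv φ₁) x ∧
      -deriv (deriv φ₁) x = ξ₁ * φ₁ x) ∧
    (∃ Lpa Lma Lpb Lmb : ℝ,
      Tendsto (deriv φ₁) (𝓝[>] a) (𝓝 Lpa) ∧
      Tendsto (deriv φ₁) (𝓝[<] a) (𝓝 Lma) ∧
      Tendsto (deriv φ₁) (𝓝[>] (-a)) (𝓝 Lpb) ∧
      Tendsto (deriv φ₁) (𝓝[<] (-a)) (𝓝 Lmb) ∧
      Lpa - Lma = -α * φ₁ a ∧
      Lpb - Lmb = -α * φ₁ (-a)) := by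
  obtain ⟨⟨hκ, -⟩, hsecular⟩ := hκ₁
  obtain rfl : φ₁ = excitedState κ₁ a := funext hφ₁
  have hjump := mul_exp_eq_mul_sinh_of_secular hsecular
  rw [← cosh_add_sinh] at hjump
  refine ⟨continuous_excitedState ha.le, excitedState_neg ha.le, excitedState_zero ha.le,
    ⟨_, abs_excitedState_le_sinh hκ.le ha.le⟩, integrable_excitedState_sq hκ ha.le,
    fun x hxa' hxa => ?_, _, _, _, _, tendsto_deriv_excitedState_nhdsGT ha.le,
    tendsto_deriv_excitedState_nhdsLT ha, tendsto_deriv_excitedState_nhdsGT_neg ha,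
    tendsto_deriv_excitedState_nhdsLT_neg ha.le, ?_, ?_⟩
  · obtain ⟨hdiff, hdiff', hode⟩ := excitedState_deriv_deriv (κ := κ₁) ha.le hxa hxa'
    exact ⟨hdiff, hdiff', by rw [hode, hξ₁]; ring⟩
  · rw [excitedState_self ha.le]
    linear_combination -hjump
  · rw [excitedState_neg ha.le, excitedState_self ha.le]
    linear_combination hjump

/-- for `αa > 1`, the explicit odd function `φ₁` is the bounded,
square-integrable excited-state eigenfunction, with eigenvalue `ξ₁ = −κ₁²`,
of the one-dimensional operator with two delta interactions of strength `α`
at `±a`. -/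
theorem excited_state_eigenfunction
    (α a κ₁ ξ₁ : ℝ) (hα : 0 < α) (ha : 0 < a) (haa : 1 < α * a)
    (hκ₁ : κ₁ ∈ Set.Ioo 0 (α / 2) ∧
      (α / 2) * Real.exp (-2 * κ₁ * a) = α / 2 - κ₁)
    (hξ₁ : ξ₁ = -κ₁ ^ 2)
    (φ₁ : ℝ → ℝ)
    (hφ₁ : ∀ x : ℝ, φ₁ x =
      if |x| ≤ a then Real.sinh (κ₁ * x)
      else (if 0 < x then (1 : ℝ) else -1) *
        Real.sinh (κ₁ * a) * Real.exp (-κ₁ * (|x| - a))) :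
    Continuous φ₁ ∧
    (∀ x : ℝ, φ₁ (-x) = -φ₁ x) ∧
    φ₁ 0 = 0 ∧
    (∃ C : ℝ, ∀ x : ℝ, |φ₁ x| ≤ C) ∧
    Integrable (fun x : ℝ => (φ₁ x) ^ 2) ∧
    (∀ x : ℝ, x ≠ -a → x ≠ a →
      DifferentiableAt ℝ φ₁ x ∧ DifferentiableAt ℝ (deriv φ₁) x ∧
      -deriv (deriv φ₁) x = ξ₁ * φ₁ x) ∧
    (∃ Lpa Lma Lpb Lmb : ℝ,
      Tendsto (deriv φ₁) (𝓝[>] a) (𝓝 Lpa) ∧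
      Tendsto (deriv φ₁) (𝓝[<] a) (𝓝 Lma) ∧
      Tendsto (deriv φ₁) (𝓝[>] (-a)) (𝓝 Lpb) ∧
      Tendsto (deriv φ₁) (𝓝[<] (-a)) (𝓝 Lmb) ∧
      Lpa - Lma = -α * φ₁ a ∧
      Lpb - Lmb = -α * φ₁ (-a)) :=
  excited_state_eigenfunction_general α a κ₁ ξ₁ ha hκ₁ hξ₁ φ₁ hφ₁
end

section
/- Let x₁⁰ ∈ ℝ and R > 0, and set I := (x₁⁰ − R, x₁⁰ + R). Then for every smooth compactly supported ψ : ℝ² → ℂ, ∫_{ℝ²} |ψ(x)|² / (1 + (x₁ − x₁⁰)²) dx ≤ 16 ∫_{ℝ²} |∂₁ψ(x)|² dx + (2 + 16/R²) ∫_{I × ℝ} |ψ(x)|² dx. -/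
open MeasureTheory Set

private lemma normsq_c (z : ℂ) : ‖z‖^2 = z.re^2 + z.im^2 := by
  rw [Complex.sq_norm, Complex.normSq_apply]; ring

private lemma hasDerivAt_normsq {f : ℝ → ℂ} (hf : ContDiff ℝ (⊤ : ℕ∞) f) (t : ℝ) :
    HasDerivAt (fun s => ‖f s‖^2)
      (2*((f t).re*(deriv f t).re + (f t).im*(deriv f t).im)) t := by
  have hd : HasDerivAt f (deriv f t) t := (hf.differentiable (by simp) t).hasDerivAt
  have hre : HasDerivAt (fun s => (f s).re) ((deriv f t).re) t :=
    Complex.reCLM.hasFDerivAt.comp_hasDerivAt t hd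
  have him : HasDerivAt (fun s => (f s).im) ((deriv f t).im) t :=
    Complex.imCLM.hasFDerivAt.comp_hasDerivAt t hd
  have h2 : HasDerivAt (fun s => (f s).re * (f s).re + (f s).im * (f s).im)
      (2*((f t).re*(deriv f t).re + (f t).im*(deriv f t).im)) t := by
    rw [show 2*((f t).re*(deriv f t).re + (f t).im*(deriv f t).im) = ((deriv f t).re * (f t).re + (f t).re * (deriv f t).re) + ((deriv f t).im * (f t).im + (f t).im * (deriv f t).im) by ring]; exact (hre.mul hre).add (him.mul him)
  have heq : (fun s => ‖f s‖^2) = fun s => (f s).re * (f s).re + (f s).im * (f s).im := by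
    funext s; rw [normsq_c]; ring
  rw [heq]; exact h2

private lemma half_line (f : ℝ → ℂ) (hf : ContDiff ℝ (⊤ : ℕ∞) f) (hs : HasCompactSupport f)
    {R : ℝ} (hR : 0 < R) :
    ∫ t in Ioi R, ‖f t‖^2 / t^2 ≤
      (4/R^2) * (∫ t in Ioo (-R) R, ‖f t‖^2) + 6 * ∫ t, ‖deriv f t‖^2 := by
  classical
  set g : ℝ → ℝ := fun t => ‖f t‖^2 with hg_def
  set g' : ℝ → ℝ := fun t => 2*((f t).re*(deriv f t).re + (f t).im*(deriv f t).im) with hg'_def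
  have hfc : Continuous f := hf.continuous
  have hdc : Continuous (deriv f) := hf.continuous_deriv (by simp)
  have hgc : Continuous g := (hfc.norm.pow 2)
  have hg'c : Continuous g' := by
    apply Continuous.mul continuous_const
    exact ((Complex.continuous_re.comp hfc).mul (Complex.continuous_re.comp hdc)).add
      ((Complex.continuous_im.comp hfc).mul (Complex.continuous_im.comp hdc))
  have hgs : HasCompactSupport g := by
    apply hs.comp_left (g := fun z : ℂ => ‖z‖^2); simp
  have hds : HasCompactSupport (fun t => ‖deriv f t‖^2) := by
    apply hs.deriv.comp_left (g := fun z : ℂ => ‖z‖^2); simp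
  have hgint : Integrable g := hgc.integrable_of_hasCompactSupport hgs
  have hdint : Integrable (fun t => ‖deriv f t‖^2) :=
    ((hdc.norm.pow 2)).integrable_of_hasCompactSupport hds
  have hgnn : ∀ t, 0 ≤ g t := fun t => by positivity
  -- choose T beyond the support
  obtain ⟨M, hM⟩ := (hs.isBounded).subset_closedBall 0
  set T : ℝ := max (M + 1) (R + 1) with hT_def
  have hRT : R < T := lt_of_lt_of_le (by linarith) (le_max_right _ _)
  have hT0 : 0 < T := lt_trans hR hRT
  have hfT : ∀ t, T ≤ |t| → f t = 0 := by
    intro t ht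
    apply image_eq_zero_of_notMem_tsupport
    intro hmem
    have h1 : dist t 0 ≤ M := hM hmem
    rw [Real.dist_eq, sub_zero] at h1
    have : M + 1 ≤ |t| := le_trans (le_max_left _ _) ht
    linarith
  -- Step A: FTC on [0,R]
  have hFTC1 : ∫ t in (0:ℝ)..R, (g t + t * g' t)/R^2 = g R / R := by
    have hder : ∀ t ∈ uIcc (0:ℝ) R, HasDerivAt (fun s => s * g s / R^2) ((g t + t * g' t)/R^2) t := by
      intro t _
      have h1 : HasDerivAt (fun s => s * g s) (1 * g t + t * g' t) t :=
        (hasDerivAt_id t).mul (hasDerivAt_normsq hf t)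
      have h2 := h1.div_const (R^2)
      rw [show ((g t + t * g' t)/R^2) = (1 * g t + t * g' t)/R^2 by ring]; exact h2
    have hcont1 : Continuous (fun t : ℝ => (g t + t * g' t)/R^2) := by fun_prop
    rw [intervalIntegral.integral_eq_sub_of_hasDerivAt hder (hcont1.intervalIntegrable _ _)]
    field_simp
    try ring
  have hgR : g R / R ≤ (2/R^2) * (∫ t in Ioc 0 R, g t) + ∫ t in Ioc 0 R, ‖deriv f t‖^2 := by
    rw [← hFTC1]
    have hmono : ∫ t in (0:ℝ)..R, (g t + t * g' t)/R^2 ≤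
        ∫ t in (0:ℝ)..R, ((2/R^2) * g t + ‖deriv f t‖^2) := by
      apply intervalIntegral.integral_mono_on hR.le
      · exact (Continuous.intervalIntegrable (by fun_prop) _ _)
      · exact (Continuous.intervalIntegrable (by fun_prop) _ _)
      · intro t ht
        obtain ⟨ht0, htR⟩ := ht
        have ht2 : t^2 ≤ R^2 := by nlinarith
        have e1 : g t = (f t).re^2 + (f t).im^2 := normsq_c (f t)
        have e2 : ‖deriv f t‖^2 = (deriv f t).re^2 + (deriv f t).im^2 := normsq_c (deriv f t)
        have hg't : g' t = 2*((f t).re*(deriv f t).re + (f t).im*(deriv f t).im) := rfl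
        have key : g t + t * g' t ≤ 2 * g t + R^2 * ‖deriv f t‖^2 := by
          rw [e1, e2, hg't]
          nlinarith [sq_nonneg ((f t).re - t*(deriv f t).re), sq_nonneg ((f t).im - t*(deriv f t).im),
            mul_le_mul_of_nonneg_right ht2 (add_nonneg (sq_nonneg (deriv f t).re) (sq_nonneg (deriv f t).im))]
        calc (g t + t * g' t)/R^2 ≤ (2 * g t + R^2 * ‖deriv f t‖^2)/R^2 := by gcongr
          _ = (2/R^2) * g t + ‖deriv f t‖^2 := by field_simp; try ring
    calc ∫ t in (0:ℝ)..R, (g t + t * g' t)/R^2 ≤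
        ∫ t in (0:ℝ)..R, ((2/R^2) * g t + ‖deriv f t‖^2) := hmono
      _ = (2/R^2) * (∫ t in Ioc 0 R, g t) + ∫ t in Ioc 0 R, ‖deriv f t‖^2 := by
        rw [intervalIntegral.integral_add (Continuous.intervalIntegrable (by fun_prop) _ _)
          (by exact (hdc.norm.pow 2).intervalIntegrable _ _ : IntervalIntegrable (fun t => ‖deriv f t‖^2) volume 0 R), intervalIntegral.integral_const_mul,
          intervalIntegral.integral_of_le hR.le, intervalIntegral.integral_of_le hR.le]
  -- integrability of g/t^2 on Ioi R
  have hmeas : Measurable (fun t : ℝ => g t / t^2) :=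
    hgc.measurable.div ((measurable_id.pow_const 2))
  have hIntOn : IntegrableOn (fun t => g t / t^2) (Ioi R) volume := by
    refine Integrable.mono' ((hgint.div_const (R^2)).restrict) hmeas.aestronglyMeasurable ?_
    rw [ae_restrict_iff' measurableSet_Ioi]
    filter_upwards with t ht
    have h1 : R^2 ≤ t^2 := by nlinarith [le_of_lt (mem_Ioi.1 ht)]
    rw [Real.norm_eq_abs, abs_of_nonneg (by positivity)]
    gcongr
  have hgT : g T = 0 := by
    have : f T = 0 := hfT T (by rw [abs_of_pos hT0])
    simp [hg_def, this]
  have hsplit : ∫ t in Ioi R, g t / t^2 = ∫ t in R..T, g t / t^2 := by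
    rw [intervalIntegral.integral_of_le hRT.le]
    have hset : Ioi R = Ioc R T ∪ Ioi T := (Ioc_union_Ioi_eq_Ioi hRT.le).symm
    rw [hset, setIntegral_union (Ioc_disjoint_Ioi le_rfl) measurableSet_Ioi
      (hIntOn.mono_set Ioc_subset_Ioi_self) (hIntOn.mono_set (Ioi_subset_Ioi hRT.le))]
    have hzero : ∫ t in Ioi T, g t / t^2 = 0 := by
      rw [setIntegral_congr_fun measurableSet_Ioi (g := fun _ => (0:ℝ))
        (fun t ht => by
          have : f t = 0 := hfT t (by rw [abs_of_pos (lt_trans hT0 ht)]; exact le_of_lt ht)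
          simp [hg_def, this])]
      simp
    rw [hzero, add_zero]
  -- FTC on [R,T]
  have hIIg : IntervalIntegrable (fun t => g t / t^2) volume R T := by
    apply ContinuousOn.intervalIntegrable
    apply hgc.continuousOn.div (continuousOn_pow 2)
    intro t ht
    rw [uIcc_of_le hRT.le] at ht
    have : 0 < t := lt_of_lt_of_le hR ht.1
    positivity
  have hIIg' : IntervalIntegrable (fun t => g' t / t) volume R T := by
    apply ContinuousOn.intervalIntegrable
    apply hg'c.continuousOn.div continuousOn_id
    intro t ht
    rw [uIcc_of_le hRT.le] at ht
    exact ne_of_gt (lt_of_lt_of_le hR ht.1)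
  have hIId : IntervalIntegrable (fun t => ‖deriv f t‖^2) volume R T :=
    (hdc.norm.pow 2).intervalIntegrable _ _
  have hFTC2 : ∫ t in R..T, (g' t / t - g t / t^2) = - (g R / R) := by
    have hder : ∀ t ∈ uIcc R T, HasDerivAt (fun s => g s / s) (g' t / t - g t / t^2) t := by
      intro t ht
      rw [uIcc_of_le hRT.le] at ht
      have ht0 : 0 < t := lt_of_lt_of_le hR ht.1
      have h1 := (hasDerivAt_normsq hf t).div (hasDerivAt_id t) (ne_of_gt ht0)
      have h2 : g' t / t - g t / t^2 = (g' t * id t - g t * 1)/ (id t)^2 := by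
        simp only [id_eq]
        field_simp
      rw [h2]
      exact h1
    rw [intervalIntegral.integral_eq_sub_of_hasDerivAt hder (hIIg'.sub hIIg)]
    rw [hgT]
    simp
  have hXeq : ∫ t in R..T, g t / t^2 = g R / R + ∫ t in R..T, g' t / t := by
    have h := intervalIntegral.integral_sub hIIg' hIIg
    rw [hFTC2] at h
    linarith
  have hmono2 : ∫ t in R..T, g' t / t ≤
      ∫ t in R..T, ((1/2) * (g t / t^2) + 2 * ‖deriv f t‖^2) := by
    apply intervalIntegral.integral_mono_on hRT.le hIIg'
      ((hIIg.const_mul _).add (hIId.const_mul _))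
    intro t ht
    have ht0 : 0 < t := lt_of_lt_of_le hR ht.1
    have e1 : g t = (f t).re^2 + (f t).im^2 := normsq_c (f t)
    have e2 : ‖deriv f t‖^2 = (deriv f t).re^2 + (deriv f t).im^2 := normsq_c (deriv f t)
    have hg't : g' t = 2*((f t).re*(deriv f t).re + (f t).im*(deriv f t).im) := rfl
    have key : g' t * t ≤ (1/2) * g t + 2 * ‖deriv f t‖^2 * t^2 := by
      rw [e1, e2, hg't]
      nlinarith [sq_nonneg ((f t).re - 2*t*(deriv f t).re), sq_nonneg ((f t).im - 2*t*(deriv f t).im)]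
    calc g' t / t = (g' t * t)/t^2 := by field_simp; try ring
      _ ≤ ((1/2) * g t + 2 * ‖deriv f t‖^2 * t^2)/t^2 := by gcongr
      _ = (1/2) * (g t / t^2) + 2 * ‖deriv f t‖^2 := by field_simp; try ring
  have hsplit2 : ∫ t in R..T, ((1/2) * (g t / t^2) + 2 * ‖deriv f t‖^2)
      = (1/2) * (∫ t in R..T, g t / t^2) + 2 * (∫ t in R..T, ‖deriv f t‖^2) := by
    rw [intervalIntegral.integral_add (hIIg.const_mul _) (hIId.const_mul _),
      intervalIntegral.integral_const_mul, intervalIntegral.integral_const_mul]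
  have hX : ∫ t in R..T, g t / t^2 ≤ 2 * (g R / R) + 4 * ∫ t in R..T, ‖deriv f t‖^2 := by
    linarith [hXeq, hmono2, hsplit2]
  -- assemble
  have hnn : ∀ t, (0:ℝ) ≤ ‖deriv f t‖^2 := fun t => by positivity
  have hYB : ∫ t in R..T, ‖deriv f t‖^2 ≤ ∫ t, ‖deriv f t‖^2 := by
    rw [intervalIntegral.integral_of_le hRT.le]
    exact setIntegral_le_integral hdint (Filter.Eventually.of_forall hnn)
  have hY1 : ∫ t in Ioc 0 R, ‖deriv f t‖^2 ≤ ∫ t, ‖deriv f t‖^2 :=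
    setIntegral_le_integral hdint (Filter.Eventually.of_forall hnn)
  have hG : ∫ t in Ioc 0 R, g t ≤ ∫ t in Ioo (-R) R, g t := by
    rw [integral_Ioc_eq_integral_Ioo]
    exact setIntegral_mono_set hgint.integrableOn (Filter.Eventually.of_forall hgnn)
      (HasSubset.Subset.eventuallyLE (Ioo_subset_Ioo (by linarith) le_rfl))
  have hB0 : 0 ≤ ∫ t, ‖deriv f t‖^2 := integral_nonneg hnn
  have hR2 : (0:ℝ) < R^2 := by positivity
  have hGmul := mul_le_mul_of_nonneg_left hG (le_of_lt (by positivity : (0:ℝ) < 2/R^2))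
  rw [hsplit]
  have h4 : 2*(2/R^2 * (∫ t in Ioo (-R) R, g t)) = 4/R^2 * (∫ t in Ioo (-R) R, g t) := by
    ring
  linarith [hX, hgR, hYB, hY1, hGmul, h4]

private lemma oneD (f : ℝ → ℂ) (hf : ContDiff ℝ (⊤ : ℕ∞) f) (hs : HasCompactSupport f)
    {R : ℝ} (hR : 0 < R) :
    ∫ t, ‖f t‖^2 / (1 + t^2) ≤
      16 * (∫ t, ‖deriv f t‖^2) + (2 + 16/R^2) * ∫ t in Ioo (-R) R, ‖f t‖^2 := by
  classical
  set g : ℝ → ℝ := fun t => ‖f t‖^2 with hg_def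
  have hfc : Continuous f := hf.continuous
  have hdc : Continuous (deriv f) := hf.continuous_deriv (by simp)
  have hgc : Continuous g := hfc.norm.pow 2
  have hgs : HasCompactSupport g := by
    apply hs.comp_left (g := fun z : ℂ => ‖z‖^2); simp
  have hgint : Integrable g := hgc.integrable_of_hasCompactSupport hgs
  have hgnn : ∀ t, 0 ≤ g t := fun t => by positivity
  have hds : HasCompactSupport (fun t => ‖deriv f t‖^2) := by
    apply hs.deriv.comp_left (g := fun z : ℂ => ‖z‖^2); simp
  have hdint : Integrable (fun t => ‖deriv f t‖^2) :=
    (hdc.norm.pow 2).integrable_of_hasCompactSupport hds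
  have hB0 : 0 ≤ ∫ t, ‖deriv f t‖^2 := integral_nonneg (fun t => by positivity)
  have hG0 : 0 ≤ ∫ t in Ioo (-R) R, g t := setIntegral_nonneg measurableSet_Ioo (fun t _ => hgnn t)
  have hmeas : Measurable (fun t : ℝ => g t / t^2) :=
    hgc.measurable.div ((measurable_id.pow_const 2))
  -- integrability of g/t^2 on Ici R and Iic (-R)
  have hIntOn : ∀ s : Set ℝ, MeasurableSet s → (∀ t ∈ s, R^2 ≤ t^2) →
      IntegrableOn (fun t => g t / t^2) s volume := by
    intro s hms hsub
    refine Integrable.mono' ((hgint.div_const (R^2)).restrict) hmeas.aestronglyMeasurable ?_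
    rw [ae_restrict_iff' hms]
    filter_upwards with t ht
    have h1 : R^2 ≤ t^2 := hsub t ht
    rw [Real.norm_eq_abs, abs_of_nonneg (by positivity)]
    gcongr
  have hIci : IntegrableOn (fun t => g t / t^2) (Ici R) volume :=
    hIntOn _ measurableSet_Ici (fun t ht => by nlinarith [mem_Ici.1 ht])
  have hIic : IntegrableOn (fun t => g t / t^2) (Iic (-R)) volume :=
    hIntOn _ measurableSet_Iic (fun t ht => by nlinarith [mem_Iic.1 ht])
  -- LHS integrable
  have hLc : Continuous (fun t : ℝ => g t / (1 + t^2)) := by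
    apply hgc.div (by fun_prop)
    intro t; positivity
  have hLs : HasCompactSupport (fun t : ℝ => g t / (1 + t^2)) := by
    apply hgs.mono
    intro t ht
    simp only [Function.mem_support] at ht ⊢
    intro h; apply ht; rw [h]; simp
  have hLint : Integrable (fun t : ℝ => g t / (1 + t^2)) :=
    hLc.integrable_of_hasCompactSupport hLs
  -- pointwise bound
  have hpw : ∀ t : ℝ, g t / (1 + t^2) ≤
      (Ioo (-R) R).indicator g t + (Ici R).indicator (fun t => g t / t^2) t
        + (Iic (-R)).indicator (fun t => g t / t^2) t := by
    intro t
    have hi1 : 0 ≤ (Ioo (-R) R).indicator g t :=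
      Set.indicator_nonneg (fun t _ => hgnn t) t
    have hi2 : 0 ≤ (Ici R).indicator (fun t => g t / t^2) t :=
      Set.indicator_nonneg (fun t _ => by positivity) t
    have hi3 : 0 ≤ (Iic (-R)).indicator (fun t => g t / t^2) t :=
      Set.indicator_nonneg (fun t _ => by positivity) t
    by_cases h1 : R ≤ t
    · have : (Ici R).indicator (fun t => g t / t^2) t = g t / t^2 :=
        Set.indicator_of_mem (mem_Ici.2 h1) _
      rw [this]
      have : g t / (1 + t^2) ≤ g t / t^2 :=
        div_le_div_of_nonneg_left (hgnn t) (by nlinarith) (by linarith)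
      linarith
    · by_cases h2 : t ≤ -R
      · have : (Iic (-R)).indicator (fun t => g t / t^2) t = g t / t^2 :=
          Set.indicator_of_mem (mem_Iic.2 h2) _
        rw [this]
        have : g t / (1 + t^2) ≤ g t / t^2 :=
          div_le_div_of_nonneg_left (hgnn t) (by nlinarith) (by linarith)
        linarith
      · have hmem : t ∈ Ioo (-R) R := ⟨by linarith, by linarith⟩
        have : (Ioo (-R) R).indicator g t = g t := Set.indicator_of_mem hmem _
        rw [this]
        have : g t / (1 + t^2) ≤ g t := by
          apply div_le_self (hgnn t)
          nlinarith
        linarith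
  -- integrate pointwise bound
  have hint2 : Integrable ((Ici R).indicator (fun t => g t / t^2)) :=
    (integrable_indicator_iff measurableSet_Ici).2 hIci
  have hint3 : Integrable ((Iic (-R)).indicator (fun t => g t / t^2)) :=
    (integrable_indicator_iff measurableSet_Iic).2 hIic
  have hint1 : Integrable ((Ioo (-R) R).indicator g) :=
    (integrable_indicator_iff measurableSet_Ioo).2 hgint.integrableOn
  have hA : ∫ t, g t / (1 + t^2) ≤
      (∫ t in Ioo (-R) R, g t) + (∫ t in Ioi R, g t / t^2) + ∫ t in Iio (-R), g t / t^2 := by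
    calc ∫ t, g t / (1 + t^2)
        ≤ ∫ t, ((Ioo (-R) R).indicator g t + (Ici R).indicator (fun t => g t / t^2) t
          + (Iic (-R)).indicator (fun t => g t / t^2) t) := by
          apply integral_mono hLint ((hint1.add hint2).add hint3) hpw
      _ = (∫ t in Ioo (-R) R, g t) + (∫ t in Ici R, g t / t^2) + ∫ t in Iic (-R), g t / t^2 := by
          have hint12 : Integrable (fun t => (Ioo (-R) R).indicator g t
              + (Ici R).indicator (fun t => g t / t^2) t) volume := hint1.add hint2
          rw [integral_add hint12 hint3, integral_add hint1 hint2,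
            integral_indicator measurableSet_Ioo, integral_indicator measurableSet_Ici,
            integral_indicator measurableSet_Iic]
      _ = (∫ t in Ioo (-R) R, g t) + (∫ t in Ioi R, g t / t^2) + ∫ t in Iio (-R), g t / t^2 := by
          rw [integral_Ici_eq_integral_Ioi, integral_Iic_eq_integral_Iio]
  -- half line bounds
  have hD1 : ∫ t in Ioi R, g t / t^2 ≤
      (4/R^2) * (∫ t in Ioo (-R) R, g t) + 6 * ∫ t, ‖deriv f t‖^2 := half_line f hf hs hR
  -- reflected function
  have hD2 : ∫ t in Iio (-R), g t / t^2 ≤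
      (4/R^2) * (∫ t in Ioo (-R) R, g t) + 6 * ∫ t, ‖deriv f t‖^2 := by
    have hfrev : ContDiff ℝ (⊤ : ℕ∞) (fun t => f (-t)) := hf.comp (contDiff_id.neg)
    have hsrev : HasCompactSupport (fun t => f (-t)) := by
      have := hs.comp_homeomorph (Homeomorph.neg ℝ)
      exact this
    have h := half_line (fun t => f (-t)) hfrev hsrev hR
    -- rewrite the three integrals
    have e1 : ∫ t in Ioi R, ‖f (-t)‖^2 / t^2 = ∫ t in Iio (-R), g t / t^2 := by
      rw [← integral_Iic_eq_integral_Iio]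
      rw [← integral_comp_neg_Ioi R (fun t => g t / t^2)]
      congr 1
      funext t
      simp [hg_def, neg_sq]
    have e2 : ∫ t in Ioo (-R) R, ‖f (-t)‖^2 = ∫ t in Ioo (-R) R, g t := by
      rw [← integral_Ioc_eq_integral_Ioo, ← integral_Ioc_eq_integral_Ioo,
        ← intervalIntegral.integral_of_le (by linarith : -R ≤ R),
        ← intervalIntegral.integral_of_le (by linarith : -R ≤ R)]
      have := intervalIntegral.integral_comp_neg (a := -R) (b := R) (fun t => g t)
      simp only [neg_neg] at this
      exact this
    have e3 : ∫ t, ‖deriv (fun t => f (-t)) t‖^2 = ∫ t, ‖deriv f t‖^2 := by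
      have hder : ∀ t, ‖deriv (fun t => f (-t)) t‖^2 = ‖deriv f (-t)‖^2 := by
        intro t
        rw [deriv_comp_neg]
        simp
      simp_rw [hder]
      exact integral_neg_eq_self (fun t => ‖deriv f t‖^2) volume
    rw [e1, e2, e3] at h
    exact h
  have h8a : (8:ℝ)/R^2 ≤ 16/R^2 := by gcongr <;> norm_num
  have h8c := mul_le_mul_of_nonneg_right h8a hG0
  have h8 : 4/R^2 * (∫ t in Ioo (-R) R, g t) + 4/R^2 * (∫ t in Ioo (-R) R, g t)
      = 8/R^2 * (∫ t in Ioo (-R) R, g t) := by ring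
  have hfin : (2 + 16/R^2) * (∫ t in Ioo (-R) R, g t)
      = 2 * (∫ t in Ioo (-R) R, g t) + 16/R^2 * (∫ t in Ioo (-R) R, g t) := by ring
  linarith [hA, hD1, hD2, h8, h8c, hfin, hG0, hB0]

private lemma oneD' (x₀ : ℝ) (f : ℝ → ℂ) (hf : ContDiff ℝ (⊤ : ℕ∞) f) (hs : HasCompactSupport f)
    {R : ℝ} (hR : 0 < R) :
    ∫ t, ‖f t‖^2 / (1 + (t - x₀)^2) ≤
      16 * (∫ t, ‖deriv f t‖^2) + (2 + 16/R^2) * ∫ t in Ioo (x₀ - R) (x₀ + R), ‖f t‖^2 := by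
  have hg : ContDiff ℝ (⊤ : ℕ∞) (fun s => f (s + x₀)) := hf.comp (contDiff_id.add contDiff_const)
  have hgs : HasCompactSupport (fun s => f (s + x₀)) :=
    hs.comp_homeomorph (Homeomorph.addRight x₀)
  have h := oneD _ hg hgs hR
  have e1 : ∫ s, ‖f (s + x₀)‖^2 / (1 + s^2) = ∫ t, ‖f t‖^2 / (1 + (t - x₀)^2) := by
    have h0 := integral_add_right_eq_self (μ := volume)
      (fun t => ‖f t‖^2 / (1 + (t - x₀)^2)) x₀
    rw [← h0]
    congr 1
    funext s
    simp
  have e2 : ∫ s, ‖deriv (fun s => f (s + x₀)) s‖^2 = ∫ t, ‖deriv f t‖^2 := by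
    have hder : ∀ s, deriv (fun s => f (s + x₀)) s = deriv f (s + x₀) := fun s =>
      deriv_comp_add_const f x₀ s
    simp_rw [hder]
    exact integral_add_right_eq_self (μ := volume) (fun t => ‖deriv f t‖^2) x₀
  have e3 : ∫ s in Ioo (-R) R, ‖f (s + x₀)‖^2 = ∫ t in Ioo (x₀ - R) (x₀ + R), ‖f t‖^2 := by
    rw [← integral_Ioc_eq_integral_Ioo, ← integral_Ioc_eq_integral_Ioo,
      ← intervalIntegral.integral_of_le (by linarith : -R ≤ R),
      ← intervalIntegral.integral_of_le (by linarith : x₀ - R ≤ x₀ + R)]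
    have := intervalIntegral.integral_comp_add_right (a := -R) (b := R)
      (fun t => ‖f t‖^2) x₀
    rw [this]
    congr 1 <;> ring
  rw [e1, e2, e3] at h
  exact h

/-- weighted Hardy-type inequality in the plane obtained from
the classical one-dimensional Hardy inequality in the first variable. -/
theorem weighted_hardy_plane
    (x₁0 R : ℝ) (hR : 0 < R)
    (ψ : ℝ × ℝ → ℂ) (hψ : ContDiff ℝ (⊤ : ℕ∞) ψ) (hsupp : HasCompactSupport ψ) :
    (∫ x : ℝ × ℝ, ‖ψ x‖ ^ 2 / (1 + (x.1 - x₁0) ^ 2)) ≤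
      16 * (∫ x : ℝ × ℝ, ‖deriv (fun t : ℝ => ψ (t, x.2)) x.1‖ ^ 2)
        + (2 + 16 / R ^ 2) *
          (∫ x in (Set.Ioo (x₁0 - R) (x₁0 + R)) ×ˢ (Set.univ : Set ℝ),
            ‖ψ x‖ ^ 2) := by
  classical
  -- slice properties
  have hslice_cd : ∀ y : ℝ, ContDiff ℝ (⊤ : ℕ∞) (fun t : ℝ => ψ (t, y)) := fun y =>
    hψ.comp (contDiff_id.prodMk contDiff_const)
  have hslice_supp : ∀ y : ℝ, HasCompactSupport (fun t : ℝ => ψ (t, y)) := by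
    intro y
    have hK : IsCompact (Prod.fst '' tsupport ψ) := hsupp.image continuous_fst
    apply IsCompact.of_isClosed_subset hK (isClosed_tsupport _)
    have h1 : Function.support (fun t : ℝ => ψ (t, y)) ⊆
        (fun t : ℝ => (t, y)) ⁻¹' tsupport ψ := fun t ht => subset_tsupport ψ ht
    have h2 : IsClosed ((fun t : ℝ => (t, y)) ⁻¹' tsupport ψ) :=
      (isClosed_tsupport ψ).preimage (continuous_id.prodMk continuous_const)
    refine (closure_minimal h1 h2).trans ?_
    intro t ht
    exact ⟨(t, y), ht, rfl⟩
  -- derivative of slices via fderiv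
  have hder_eq : ∀ x : ℝ × ℝ, deriv (fun t => ψ (t, x.2)) x.1 = fderiv ℝ ψ x ((1:ℝ), (0:ℝ)) := by
    intro x
    have h1 : HasFDerivAt ψ (fderiv ℝ ψ x) (x.1, x.2) := by
      simpa using (hψ.differentiable (by simp) x).hasFDerivAt
    have h2 : HasDerivAt (fun t : ℝ => ((t : ℝ), x.2)) ((1:ℝ), (0:ℝ)) x.1 :=
      (hasDerivAt_id x.1).prodMk (hasDerivAt_const x.1 x.2)
    exact (h1.comp_hasDerivAt x.1 h2).deriv
  -- integrability of the three 2D integrands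
  have hW : Continuous (fun x : ℝ × ℝ => ‖ψ x‖^2) := hψ.continuous.norm.pow 2
  have hWs : HasCompactSupport (fun x : ℝ × ℝ => ‖ψ x‖^2) := by
    apply hsupp.comp_left (g := fun z : ℂ => ‖z‖^2); simp
  have hWint : Integrable (fun x : ℝ × ℝ => ‖ψ x‖^2) := hW.integrable_of_hasCompactSupport hWs
  have hF1c : Continuous (fun x : ℝ × ℝ => ‖ψ x‖^2 / (1 + (x.1 - x₁0)^2)) := by
    apply hW.div (by fun_prop)
    intro x; positivity
  have hF1s : HasCompactSupport (fun x : ℝ × ℝ => ‖ψ x‖^2 / (1 + (x.1 - x₁0)^2)) := by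
    apply hWs.mono
    intro x hx
    simp only [Function.mem_support] at hx ⊢
    intro h; apply hx; rw [h]; simp
  have hF1int : Integrable (fun x : ℝ × ℝ => ‖ψ x‖^2 / (1 + (x.1 - x₁0)^2)) :=
    hF1c.integrable_of_hasCompactSupport hF1s
  have hF2c : Continuous (fun x : ℝ × ℝ => ‖fderiv ℝ ψ x ((1:ℝ), (0:ℝ))‖^2) :=
    (((hψ.continuous_fderiv (by simp)).clm_apply continuous_const).norm.pow 2)
  have hF2s : HasCompactSupport (fun x : ℝ × ℝ => ‖fderiv ℝ ψ x ((1:ℝ), (0:ℝ))‖^2) := by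
    apply (hsupp.fderiv_apply ℝ ((1:ℝ), (0:ℝ))).comp_left (g := fun z : ℂ => ‖z‖^2)
    simp
  have hF2int : Integrable (fun x : ℝ × ℝ => ‖fderiv ℝ ψ x ((1:ℝ), (0:ℝ))‖^2) :=
    hF2c.integrable_of_hasCompactSupport hF2s
  -- Fubini for the three integrals
  have hvol : (volume : Measure (ℝ × ℝ)) = (volume : Measure ℝ).prod volume :=
    Measure.volume_eq_prod ℝ ℝ
  have fub1 : (∫ x : ℝ × ℝ, ‖ψ x‖^2 / (1 + (x.1 - x₁0)^2))
      = ∫ y, ∫ t, ‖ψ (t, y)‖^2 / (1 + (t - x₁0)^2) := by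
    rw [hvol] at hF1int ⊢
    exact integral_prod_symm _ hF1int
  have fub2 : (∫ x : ℝ × ℝ, ‖fderiv ℝ ψ x ((1:ℝ), (0:ℝ))‖^2)
      = ∫ y, ∫ t, ‖fderiv ℝ ψ (t, y) ((1:ℝ), (0:ℝ))‖^2 := by
    rw [hvol] at hF2int ⊢
    exact integral_prod_symm _ hF2int
  have hres : (volume : Measure (ℝ × ℝ)).restrict ((Ioo (x₁0 - R) (x₁0 + R)) ×ˢ (univ : Set ℝ))
      = ((volume : Measure ℝ).restrict (Ioo (x₁0 - R) (x₁0 + R))).prod volume := by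
    rw [hvol, ← Measure.prod_restrict, Measure.restrict_univ]
  have hWrint : Integrable (fun x : ℝ × ℝ => ‖ψ x‖^2)
      (((volume : Measure ℝ).restrict (Ioo (x₁0 - R) (x₁0 + R))).prod volume) := by
    rw [← hres]
    exact hWint.restrict
  have fub3 : (∫ x in (Set.Ioo (x₁0 - R) (x₁0 + R)) ×ˢ (Set.univ : Set ℝ), ‖ψ x‖^2)
      = ∫ y, ∫ t in Ioo (x₁0 - R) (x₁0 + R), ‖ψ (t, y)‖^2 := by
    rw [hres]
    exact integral_prod_symm _ hWrint
  -- marginal integrability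
  have hL : Integrable (fun y => ∫ t, ‖ψ (t, y)‖^2 / (1 + (t - x₁0)^2)) volume := by
    rw [hvol] at hF1int
    exact hF1int.integral_prod_right
  have hB : Integrable (fun y => ∫ t, ‖fderiv ℝ ψ (t, y) ((1:ℝ),(0:ℝ))‖^2) volume := by
    rw [hvol] at hF2int
    exact hF2int.integral_prod_right
  have hG : Integrable (fun y => ∫ t in Ioo (x₁0 - R) (x₁0 + R), ‖ψ (t, y)‖^2) volume :=
    hWrint.integral_prod_right
  -- per-slice inequality
  have hslice : ∀ y : ℝ, (∫ t, ‖ψ (t, y)‖^2 / (1 + (t - x₁0)^2)) ≤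
      16 * (∫ t, ‖fderiv ℝ ψ (t, y) ((1:ℝ),(0:ℝ))‖^2)
        + (2 + 16/R^2) * ∫ t in Ioo (x₁0 - R) (x₁0 + R), ‖ψ (t, y)‖^2 := by
    intro y
    have h := oneD' x₁0 (fun t => ψ (t, y)) (hslice_cd y) (hslice_supp y) hR
    have he : ∀ t : ℝ, deriv (fun s => ψ (s, y)) t = fderiv ℝ ψ (t, y) ((1:ℝ),(0:ℝ)) :=
      fun t => hder_eq (t, y)
    simp_rw [he] at h
    exact h
  -- integrate over y
  have hB16 : Integrable (fun y => 16 * ∫ t, ‖fderiv ℝ ψ (t, y) ((1:ℝ),(0:ℝ))‖^2) volume :=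
    hB.const_mul 16
  have hGc : Integrable
      (fun y => (2+16/R^2) * ∫ t in Ioo (x₁0 - R) (x₁0 + R), ‖ψ (t, y)‖^2) volume :=
    hG.const_mul (2+16/R^2)
  have hsumint : Integrable (fun y => 16 * (∫ t, ‖fderiv ℝ ψ (t, y) ((1:ℝ),(0:ℝ))‖^2)
      + (2+16/R^2) * ∫ t in Ioo (x₁0 - R) (x₁0 + R), ‖ψ (t, y)‖^2) volume := hB16.add hGc
  have hmono := integral_mono hL hsumint hslice
  rw [integral_add hB16 hGc, integral_const_mul, integral_const_mul] at hmono
  have hder2 : (∫ x : ℝ × ℝ, ‖deriv (fun t : ℝ => ψ (t, x.2)) x.1‖^2)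
      = ∫ x : ℝ × ℝ, ‖fderiv ℝ ψ x ((1:ℝ),(0:ℝ))‖^2 := by
    congr 1
    funext x
    rw [hder_eq x]
  rw [hder2, fub1, fub2, fub3]
  exact hmono
end

section
/- Let α > 0, a > 0, let κ₀ be the unique solution in (α/2, ∞) of (α/2)·exp(−2κa) = κ − α/2, set ξ₀ := −κ₀², and let φ₀ : ℝ → ℝ be given by φ₀(x) := cosh(κ₀ x) for |x| ≤ a and φ₀(x) := cosh(κ₀ a)·exp(−κ₀(|x| − a)) for |x| > a. Let V₊, V₋ : ℝ → ℝ be bounded measurable functions with V₊ + V₋ integrable, and let φ : ℝ → ℝ be a Lipschitz function with compact support. Then for ψ(x₁, x₂) := φ(x₁)φ₀(x₂) one has the identity ∫_{ℝ²} |∇ψ|² + ∫_ℝ (V₊(x₁) − α)|ψ(x₁, a)|² dx₁ + ∫_ℝ (V₋(x₁) − α)|ψ(x₁, −a)|² dx₁ − ξ₀ ∫_{ℝ²} |ψ|² = (∫_ℝ φ₀²) · ∫_ℝ |φ'|² + φ₀(a)² ∫_ℝ (V₊ + V₋)(x₁) |φ(x₁)|² dx₁, where all derivatives are the almost-everywhere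 derivatives of the Lipschitz functions involved. -/
/-!
Writing `φ₀ x = p |x|` for the profile `p` on `[0, ∞)`, Fubini turns both integrals over `ℝ²`
into products of one-dimensional integrals, and after the `α ∫ φ²` terms of the two delta
interactions and the `ξ₀ = -κ₀²` term are collected, everything reduces to the energy identity
`∫ φ₀'² + κ₀² ∫ φ₀² = 2 α φ₀(a)²` of the ground state. By evenness this is twice the integral
over `(0, ∞)`, where `p'² + κ₀² p² = (p p')'` on `(0, a)` and on `(a, ∞)`; this gives
`κ₀ cosh (κ₀ a) (sinh (κ₀ a) + cosh (κ₀ a)) = κ₀ cosh (κ₀ a) exp (κ₀ a)`, and the equation defining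
`κ₀` is exactly `κ₀ exp (κ₀ a) = α cosh (κ₀ a)`.
-/

open MeasureTheory Set Filter Real

theorem exp_neg_mul_sub (b p x : ℝ) : exp (-b * (x - p)) = exp (b * p) * exp (-b * x) := by
  rw [← exp_add]; ring_nf

theorem integrableOn_exp_neg_mul_sub_Ioi {b : ℝ} (hb : 0 < b) (p : ℝ) :
    IntegrableOn (fun x => exp (-b * (x - p))) (Ioi p) := by
  simp_rw [exp_neg_mul_sub]
  exact (exp_neg_integrableOn_Ioi p hb).const_mul (exp (b * p))

theorem integral_exp_neg_mul_sub_Ioi {b : ℝ} (hb : 0 < b) (p : ℝ) :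
    ∫ x in Ioi p, exp (-b * (x - p)) = b⁻¹ := by
  simp_rw [exp_neg_mul_sub]
  rw [integral_const_mul, integral_exp_mul_Ioi (neg_lt_zero.2 hb), neg_div_neg_eq,
    ← mul_div_assoc, ← exp_add, neg_mul, add_neg_cancel, exp_zero, one_div]

theorem integrable_comp_abs {f : ℝ → ℝ} (hf : IntegrableOn f (Ioi 0)) :
    Integrable (fun x => f |x|) := by
  have hpos : IntegrableOn (fun x => f |x|) (Ioi 0) :=
    hf.congr_fun (fun x hx => by rw [abs_of_pos hx]) measurableSet_Ioi
  have hneg : IntegrableOn (fun x => f |x|) (Iic 0) := by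
    let m : MeasurableEmbedding fun x : ℝ => -x := (Homeomorph.neg ℝ).measurableEmbedding
    rw [← Measure.map_neg_eq_self (volume : Measure ℝ), m.integrableOn_map_iff]
    simp_rw [Function.comp_def, abs_neg, neg_preimage, neg_Iic, neg_zero]
    exact Iff.mpr integrableOn_Ici_iff_integrableOn_Ioi hpos
  simpa [Iic_union_Ioi] using hneg.union hpos

theorem deriv_comp_abs_sq (f : ℝ → ℝ) {x : ℝ} (hx : x ≠ 0) :
    deriv (fun y => f |y|) x ^ 2 = deriv f |x| ^ 2 := by
  rcases hx.lt_or_gt with hx | hx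
  · have hloc : (fun y => f |y|) =ᶠ[nhds x] fun y => f (-y) :=
      eventually_of_mem (Iio_mem_nhds hx) fun y hy => by simp only [abs_of_neg (mem_Iio.1 hy)]
    rw [hloc.deriv_eq, deriv_comp_neg, abs_of_neg hx, neg_sq]
  · have hloc : (fun y => f |y|) =ᶠ[nhds x] f :=
      eventually_of_mem (Ioi_mem_nhds hx) fun y hy => by simp only [abs_of_pos (mem_Ioi.1 hy)]
    rw [hloc.deriv_eq, abs_of_pos hx]

theorem deriv_comp_abs_sq_ae (f : ℝ → ℝ) :
    (fun x => deriv (fun y => f |y|) x ^ 2) =ᵐ[volume] fun x => deriv f |x| ^ 2 := by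
  filter_upwards [volume.ae_ne 0] with x hx using deriv_comp_abs_sq f hx

theorem integral_prod_mul_add_mul {X Y : Type*} [MeasurableSpace X] [MeasurableSpace Y]
    {μ : Measure X} {ν : Measure Y} [SFinite μ] [SFinite ν] {f₁ f₂ : X → ℝ} {g₁ g₂ : Y → ℝ}
    (hf₁ : Integrable f₁ μ) (hg₁ : Integrable g₁ ν) (hf₂ : Integrable f₂ μ)
    (hg₂ : Integrable g₂ ν) :
    ∫ z, (f₁ z.1 * g₁ z.2 + f₂ z.1 * g₂ z.2) ∂μ.prod ν
      = (∫ x, f₁ x ∂μ) * (∫ y, g₁ y ∂ν) + (∫ x, f₂ x ∂μ) * (∫ y, g₂ y ∂ν) := by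
  rw [integral_add (hf₁.mul_prod hg₁) (hf₂.mul_prod hg₂), integral_prod_mul, integral_prod_mul]

theorem LipschitzWith.integrable_deriv_sq {φ : ℝ → ℝ} {K : NNReal} {μ : Measure ℝ}
    [IsFiniteMeasureOnCompacts μ] (hφ : LipschitzWith K φ) (hs : HasCompactSupport φ) :
    Integrable (fun x => deriv φ x ^ 2) μ := by
  have hsupp : Function.support (fun x => deriv φ x ^ 2) ⊆ tsupport (deriv φ) := fun x hx =>
    subset_tsupport _ (by simpa using hx)
  refine (integrableOn_iff_integrable_of_support_subset hsupp).1 <|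
    Measure.integrableOn_of_bounded (M := (K : ℝ) ^ 2) hs.deriv.measure_lt_top.ne
      ((measurable_deriv φ).pow_const 2).aestronglyMeasurable (ae_of_all _ fun x => ?_)
  rw [norm_pow]
  exact pow_le_pow_left₀ (norm_nonneg _) (norm_deriv_le_of_lipschitz hφ) 2

theorem HasCompactSupport.integrable_sq {φ : ℝ → ℝ} {μ : Measure ℝ} [IsFiniteMeasureOnCompacts μ]
    (hc : Continuous φ) (hs : HasCompactSupport φ) : Integrable (fun x => φ x ^ 2) μ := by
  have hs2 : HasCompactSupport (φ ^ 2) := sq φ ▸ hs.mul_left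
  exact (hc.pow 2).integrable_of_hasCompactSupport hs2

theorem MeasureTheory.Integrable.bounded_mul {X : Type*} [MeasurableSpace X] {μ : Measure X}
    {V f : X → ℝ}
    (hf : Integrable f μ) (hV : Measurable V) (hVb : ∃ C, ∀ x, |V x| ≤ C) :
    Integrable (fun x => V x * f x) μ :=
  let ⟨_, hC⟩ := hVb
  hf.bdd_mul hV.aestronglyMeasurable (ae_of_all _ hC)

theorem integral_sub_mul_mul_const_sq {X : Type*} [MeasurableSpace X] {μ : Measure X}
    {V f : X → ℝ} (hVf : Integrable (fun x => V x * f x ^ 2) μ)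
    (hf : Integrable (fun x => f x ^ 2) μ) (α c : ℝ) :
    ∫ x, (V x - α) * (f x * c) ^ 2 ∂μ
      = c ^ 2 * ∫ x, V x * f x ^ 2 ∂μ - α * c ^ 2 * ∫ x, f x ^ 2 ∂μ := by
  rw [← integral_const_mul, ← integral_const_mul, ← integral_sub (hVf.const_mul _)
    (hf.const_mul _)]
  congr 1 with x
  ring

theorem mul_exp_eq_mul_cosh_of_groundState_eq {α κ a : ℝ}
    (h : α / 2 * exp (-2 * κ * a) = κ - α / 2) : κ * exp (κ * a) = α * cosh (κ * a) := by
  have hexp : exp (-2 * κ * a) * exp (κ * a) = exp (-(κ * a)) := by rw [← exp_add]; ring_nf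
  rw [cosh_eq]
  linear_combination -exp (κ * a) * h + α / 2 * hexp

noncomputable def groundStateProfile (κ a t : ℝ) : ℝ :=
  if t ≤ a then cosh (κ * t) else cosh (κ * a) * exp (-κ * (t - a))

namespace groundStateProfile

variable {κ a t : ℝ}

theorem of_le (h : t ≤ a) : groundStateProfile κ a t = cosh (κ * t) := if_pos h

theorem of_gt (h : a < t) :
    groundStateProfile κ a t = cosh (κ * a) * exp (-κ * (t - a)) := if_neg h.not_ge

theorem comp_abs (x : ℝ) : groundStateProfile κ a |x|
    = if |x| ≤ a then cosh (κ * x) else cosh (κ * a) * exp (-κ * (|x| - a)) := by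
  rcases abs_choice x with h | h <;> simp [groundStateProfile, h]

theorem sq_of_gt (h : a < t) :
    groundStateProfile κ a t ^ 2 = cosh (κ * a) ^ 2 * exp (-(2 * κ) * (t - a)) := by
  rw [of_gt h, mul_pow, ← exp_nat_mul]
  ring_nf

theorem deriv_of_lt (h : t < a) : deriv (groundStateProfile κ a) t = κ * sinh (κ * t) := by
  have hloc : groundStateProfile κ a =ᶠ[nhds t] fun s => cosh (κ * s) :=
    eventually_of_mem (Iio_mem_nhds h) fun s hs => of_le (le_of_lt hs)
  rw [hloc.deriv_eq]
  simpa [mul_comm] using ((hasDerivAt_id t).const_mul κ).cosh.deriv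

theorem deriv_of_gt (h : a < t) :
    deriv (groundStateProfile κ a) t = -κ * groundStateProfile κ a t := by
  have hloc : groundStateProfile κ a =ᶠ[nhds t] fun s => cosh (κ * a) * exp (-κ * (s - a)) :=
    eventually_of_mem (Ioi_mem_nhds h) fun s hs => of_gt hs
  rw [hloc.deriv_eq, of_gt h,
    ((((hasDerivAt_id' t).sub_const a).const_mul (-κ)).exp.const_mul (cosh (κ * a))).deriv]
  ring

theorem integrableOn_Ioi_sq (hκ : 0 < κ) :
    IntegrableOn (fun t => groundStateProfile κ a t ^ 2) (Ioi a) := by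
  exact IntegrableOn.congr_fun
    ((integrableOn_exp_neg_mul_sub_Ioi (by positivity) a).const_mul (cosh (κ * a) ^ 2))
    (fun t ht => (sq_of_gt ht).symm) measurableSet_Ioi

theorem integral_Ioi_sq (hκ : 0 < κ) :
    ∫ t in Ioi a, groundStateProfile κ a t ^ 2 = cosh (κ * a) ^ 2 / (2 * κ) := by
  rw [setIntegral_congr_fun measurableSet_Ioi fun t ht => sq_of_gt ht, integral_const_mul,
    integral_exp_neg_mul_sub_Ioi (by positivity) a, div_eq_mul_inv]

theorem integrableOn_Ioi_zero_sq (hκ : 0 < κ) (ha : 0 ≤ a) :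
    IntegrableOn (fun t => groundStateProfile κ a t ^ 2) (Ioi 0) := by
  rw [← Ioc_union_Ioi_eq_Ioi ha]
  refine IntegrableOn.union ?_ (integrableOn_Ioi_sq hκ)
  exact ((by fun_prop : Continuous fun t => cosh (κ * t) ^ 2).integrableOn_Icc.mono_set
    Ioc_subset_Icc_self).congr_fun (fun t ht => by rw [of_le ht.2]) measurableSet_Ioc

theorem integrableOn_Ioi_zero_deriv_sq (hκ : 0 < κ) (ha : 0 ≤ a) :
    IntegrableOn (fun t => deriv (groundStateProfile κ a) t ^ 2) (Ioi 0) := by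
  rw [← Ioc_union_Ioi_eq_Ioi ha]
  refine IntegrableOn.union ?_ <| IntegrableOn.congr_fun
    ((integrableOn_Ioi_sq hκ).const_mul (κ ^ 2)) (fun t ht => by rw [deriv_of_gt ht]; ring)
    measurableSet_Ioi
  rw [integrableOn_Ioc_iff_integrableOn_Ioo]
  exact ((by fun_prop : Continuous fun t => (κ * sinh (κ * t)) ^ 2).integrableOn_Icc.mono_set
    Ioo_subset_Icc_self).congr_fun (fun t ht => by rw [deriv_of_lt ht.2]) measurableSet_Ioo

theorem integral_Ioc_deriv_sq_add_sq (ha : 0 ≤ a) :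
    ∫ t in Ioc 0 a, (deriv (groundStateProfile κ a) t ^ 2 + κ ^ 2 * groundStateProfile κ a t ^ 2)
      = κ * sinh (κ * a) * cosh (κ * a) := by
  have hF : ∀ t, HasDerivAt (fun s => κ * (sinh (κ * s) * cosh (κ * s)))
      (κ ^ 2 * (cosh (κ * t) ^ 2 + sinh (κ * t) ^ 2)) t := fun t => by
    have h := (hasDerivAt_id' t).const_mul κ
    exact ((h.sinh.mul h.cosh).const_mul κ).congr_deriv (by ring)
  rw [integral_Ioc_eq_integral_Ioo, setIntegral_congr_fun measurableSet_Ioo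
      (g := fun t => κ ^ 2 * (cosh (κ * t) ^ 2 + sinh (κ * t) ^ 2))
      (fun t ht => by rw [deriv_of_lt ht.2, of_le ht.2.le]; ring),
    ← integral_Ioc_eq_integral_Ioo, ← intervalIntegral.integral_of_le ha,
    intervalIntegral.integral_eq_sub_of_hasDerivAt (fun t _ => hF t)
      ((by fun_prop : Continuous _).intervalIntegrable _ _), mul_zero, sinh_zero]
  ring

theorem integral_Ioi_deriv_sq_add_sq (hκ : 0 < κ) :
    ∫ t in Ioi a, (deriv (groundStateProfile κ a) t ^ 2 + κ ^ 2 * groundStateProfile κ a t ^ 2)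
      = κ * cosh (κ * a) ^ 2 := by
  rw [setIntegral_congr_fun measurableSet_Ioi
      (g := fun t => 2 * κ ^ 2 * groundStateProfile κ a t ^ 2)
      (fun t ht => by rw [deriv_of_gt ht]; ring), integral_const_mul, integral_Ioi_sq hκ]
  field_simp

theorem integral_Ioi_zero_deriv_sq_add_sq (hκ : 0 < κ) (ha : 0 ≤ a) :
    ∫ t in Ioi 0, (deriv (groundStateProfile κ a) t ^ 2 + κ ^ 2 * groundStateProfile κ a t ^ 2)
      = κ * cosh (κ * a) * exp (κ * a) := by
  have hint : IntegrableOn (fun t => deriv (groundStateProfile κ a) t ^ 2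
      + κ ^ 2 * groundStateProfile κ a t ^ 2) (Ioi 0) :=
    (integrableOn_Ioi_zero_deriv_sq hκ ha).add
      ((integrableOn_Ioi_zero_sq hκ ha).const_mul (κ ^ 2))
  rw [← Ioc_union_Ioi_eq_Ioi ha, setIntegral_union (Ioc_disjoint_Ioi le_rfl) measurableSet_Ioi
    (hint.mono_set Ioc_subset_Ioi_self) (hint.mono_set (Ioi_subset_Ioi ha)),
    integral_Ioc_deriv_sq_add_sq ha, integral_Ioi_deriv_sq_add_sq hκ, ← cosh_add_sinh]
  ring

theorem integrable_comp_abs_sq (hκ : 0 < κ) (ha : 0 ≤ a) :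
    Integrable (fun x => groundStateProfile κ a |x| ^ 2) :=
  integrable_comp_abs (integrableOn_Ioi_zero_sq hκ ha)

theorem integrable_deriv_comp_abs_sq (hκ : 0 < κ) (ha : 0 ≤ a) :
    Integrable (fun x => deriv (fun y => groundStateProfile κ a |y|) x ^ 2) :=
  (integrable_comp_abs (integrableOn_Ioi_zero_deriv_sq hκ ha)).congr
    (deriv_comp_abs_sq_ae _).symm

theorem integral_deriv_comp_abs_sq_add (hκ : 0 < κ) (ha : 0 ≤ a) :
    (∫ x, deriv (fun y => groundStateProfile κ a |y|) x ^ 2)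
      + κ ^ 2 * ∫ x, groundStateProfile κ a |x| ^ 2 = 2 * κ * cosh (κ * a) * exp (κ * a) := by
  let F t := deriv (groundStateProfile κ a) t ^ 2 + κ ^ 2 * groundStateProfile κ a t ^ 2
  rw [← integral_const_mul, ← integral_add (integrable_deriv_comp_abs_sq hκ ha)
      ((integrable_comp_abs_sq hκ ha).const_mul _),
    integral_congr_ae (g := fun x => F |x|)
      ((deriv_comp_abs_sq_ae (groundStateProfile κ a)).mono fun x hx => by simp only [F, hx]),
    integral_comp_abs, integral_Ioi_zero_deriv_sq_add_sq hκ ha]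
  ring

theorem integral_deriv_comp_abs_sq_add_of_groundState_eq {α : ℝ} (hκ : 0 < κ) (ha : 0 ≤ a)
    (h : α / 2 * exp (-2 * κ * a) = κ - α / 2) :
    (∫ x, deriv (fun y => groundStateProfile κ a |y|) x ^ 2)
      + κ ^ 2 * ∫ x, groundStateProfile κ a |x| ^ 2 = 2 * α * cosh (κ * a) ^ 2 := by
  rw [integral_deriv_comp_abs_sq_add hκ ha]
  linear_combination 2 * cosh (κ * a) * mul_exp_eq_mul_cosh_of_groundState_eq h

end groundStateProfile

theorem separated_test_function_identity_general
    (α a κ₀ ξ₀ : ℝ) (hα : 0 < α) (ha : 0 < a)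
    (hκ₀ : κ₀ ∈ Set.Ioi (α / 2) ∧
      (α / 2) * Real.exp (-2 * κ₀ * a) = κ₀ - α / 2)
    (hξ₀ : ξ₀ = -κ₀ ^ 2)
    (φ₀ : ℝ → ℝ)
    (hφ₀ : ∀ x : ℝ, φ₀ x =
      if |x| ≤ a then Real.cosh (κ₀ * x)
      else Real.cosh (κ₀ * a) * Real.exp (-κ₀ * (|x| - a)))
    (Vp Vm : ℝ → ℝ) (hVpm : Measurable Vp) (hVmm : Measurable Vm)
    (hVpb : ∃ C : ℝ, ∀ x : ℝ, |Vp x| ≤ C) (hVmb : ∃ C : ℝ, ∀ x : ℝ, |Vm x| ≤ C)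
    (φ : ℝ → ℝ) (K : NNReal) (hφ : LipschitzWith K φ)
    (hφsupp : HasCompactSupport φ) :
    ((∫ x : ℝ × ℝ,
        ((deriv φ x.1) ^ 2 * (φ₀ x.2) ^ 2 + (φ x.1) ^ 2 * (deriv φ₀ x.2) ^ 2))
      + (∫ x₁ : ℝ, (Vp x₁ - α) * (φ x₁ * φ₀ a) ^ 2)
      + (∫ x₁ : ℝ, (Vm x₁ - α) * (φ x₁ * φ₀ (-a)) ^ 2))
      - ξ₀ * (∫ x : ℝ × ℝ, (φ x.1 * φ₀ x.2) ^ 2)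
    = (∫ x : ℝ, (φ₀ x) ^ 2) * (∫ x : ℝ, (deriv φ x) ^ 2)
      + (φ₀ a) ^ 2 * (∫ x₁ : ℝ, (Vp x₁ + Vm x₁) * (φ x₁) ^ 2) := by
  obtain ⟨hκ₀α, hcond⟩ := hκ₀
  have hκ : 0 < κ₀ := by linarith [mem_Ioi.1 hκ₀α]
  obtain rfl : φ₀ = fun x => groundStateProfile κ₀ a |x| :=
    funext fun x => (hφ₀ x).trans (groundStateProfile.comp_abs x).symm
  beta_reduce
  have hφ₀a : groundStateProfile κ₀ a |a| = cosh (κ₀ * a) := by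
    rw [abs_of_pos ha, groundStateProfile.of_le le_rfl]
  have hφsq := HasCompactSupport.integrable_sq (μ := volume) hφ.continuous hφsupp
  have hVp := hφsq.bounded_mul hVpm hVpb
  have hVm := hφsq.bounded_mul hVmm hVmb
  have hnorm : ∫ x : ℝ × ℝ, (φ x.1 * groundStateProfile κ₀ a |x.2|) ^ 2
      = (∫ x, φ x ^ 2) * ∫ x, groundStateProfile κ₀ a |x| ^ 2 := by
    simp_rw [mul_pow]
    exact integral_prod_mul (fun x => φ x ^ 2) (fun y => groundStateProfile κ₀ a |y| ^ 2)
  have hpot : ∫ x, (Vp x + Vm x) * φ x ^ 2 = (∫ x, Vp x * φ x ^ 2) + ∫ x, Vm x * φ x ^ 2 := by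
    simp_rw [add_mul]
    exact integral_add hVp hVm
  rw [Measure.volume_eq_prod, integral_prod_mul_add_mul (hφ.integrable_deriv_sq hφsupp)
      (groundStateProfile.integrable_comp_abs_sq hκ ha.le) hφsq
      (groundStateProfile.integrable_deriv_comp_abs_sq hκ ha.le),
    ← Measure.volume_eq_prod, hnorm, abs_neg, hφ₀a, integral_sub_mul_mul_const_sq hVp hφsq,
    integral_sub_mul_mul_const_sq hVm hφsq, hpot, hξ₀]
  linear_combination (∫ x, φ x ^ 2)
    * groundStateProfile.integral_deriv_comp_abs_sq_add_of_groundState_eq hκ ha.le hcond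

/-- for a separated test function `ψ(x₁,x₂) = φ(x₁)φ₀(x₂)` built
from a compactly supported Lipschitz `φ` and the ground-state eigenfunction
`φ₀`, the shifted quadratic form reduces to a one-dimensional expression. -/
theorem separated_test_function_identity
    (α a κ₀ ξ₀ : ℝ) (hα : 0 < α) (ha : 0 < a)
    (hκ₀ : κ₀ ∈ Set.Ioi (α / 2) ∧
      (α / 2) * Real.exp (-2 * κ₀ * a) = κ₀ - α / 2)
    (hξ₀ : ξ₀ = -κ₀ ^ 2)
    (φ₀ : ℝ → ℝ)
    (hφ₀ : ∀ x : ℝ, φ₀ x =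
      if |x| ≤ a then Real.cosh (κ₀ * x)
      else Real.cosh (κ₀ * a) * Real.exp (-κ₀ * (|x| - a)))
    (Vp Vm : ℝ → ℝ) (hVpm : Measurable Vp) (hVmm : Measurable Vm)
    (hVpb : ∃ C : ℝ, ∀ x : ℝ, |Vp x| ≤ C) (hVmb : ∃ C : ℝ, ∀ x : ℝ, |Vm x| ≤ C)
    (hVint : Integrable (fun x : ℝ => Vp x + Vm x))
    (φ : ℝ → ℝ) (K : NNReal) (hφ : LipschitzWith K φ)
    (hφsupp : HasCompactSupport φ) :
    ((∫ x : ℝ × ℝ,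
        ((deriv φ x.1) ^ 2 * (φ₀ x.2) ^ 2 + (φ x.1) ^ 2 * (deriv φ₀ x.2) ^ 2))
      + (∫ x₁ : ℝ, (Vp x₁ - α) * (φ x₁ * φ₀ a) ^ 2)
      + (∫ x₁ : ℝ, (Vm x₁ - α) * (φ x₁ * φ₀ (-a)) ^ 2))
      - ξ₀ * (∫ x : ℝ × ℝ, (φ x.1 * φ₀ x.2) ^ 2)
    = (∫ x : ℝ, (φ₀ x) ^ 2) * (∫ x : ℝ, (deriv φ x) ^ 2)
      + (φ₀ a) ^ 2 * (∫ x₁ : ℝ, (Vp x₁ + Vm x₁) * (φ x₁) ^ 2) :=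
  separated_test_function_identity_general α a κ₀ ξ₀ hα ha hκ₀ hξ₀ φ₀ hφ₀ Vp Vm hVpm hVmm hVpb hVmb
    φ K hφ hφsupp
end

section
/- Let k ∈ ℂ with Im k > 0 and let x ∈ ℝ. Then the function p ↦ e^{ipx}/(p² − k²) is integrable on ℝ and ∫_ℝ e^{ipx}/(p² − k²) dp = (π i / k) · e^{i k |x|}. Equivalently, (1/2π) ∫_ℝ e^{ipx}/(p² − k²) dp = (i/2) · e^{i k |x|}/k, the Green function of the one-dimensional Laplacian at energy k². -/
/-!
For `Re a > 0` the function `e^{-a|y|}` is integrable and, splitting its Fourier integral at `0`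
into two exponential integrals, `𝓕 (e^{-a|·|}) ξ = 2a / ((2πξ)² + a²)`, which is integrable too.
Fourier inversion at `x` and the substitution `p = 2πξ` then give
`∫ e^{ipx} / (p² + a²) dp = (π / a) e^{-a|x|}`; the theorem is the case `a = -ik`.
-/

open MeasureTheory Complex Set Filter Asymptotics
open scoped FourierTransform Real

section

variable {a b : ℂ}

lemma ofReal_sq_add_sq_ne_zero (ha : a.re ≠ 0) (p : ℝ) : (p : ℂ) ^ 2 + a ^ 2 ≠ 0 := by
  have hfac : (p : ℂ) ^ 2 + a ^ 2 = (p + I * a) * (p - I * a) := by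
    linear_combination a ^ 2 * I_sq
  rw [hfac]
  refine mul_ne_zero (fun h => ha ?_) (fun h => ha ?_) <;>
  · simpa using congrArg im h

lemma integrable_inv_ofReal_sq_add_sq (ha : a.re ≠ 0) :
    Integrable fun p : ℝ => ((p : ℂ) ^ 2 + a ^ 2)⁻¹ := by
  have hcont : Continuous fun p : ℝ => ((p : ℂ) ^ 2 + a ^ 2)⁻¹ :=
    (by fun_prop : Continuous fun p : ℝ => (p : ℂ) ^ 2 + a ^ 2).inv₀
      (ofReal_sq_add_sq_ne_zero ha)
  have hequiv : (fun p : ℝ => (p : ℂ) ^ 2 + a ^ 2) ~[cocompact ℝ]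
      fun p : ℝ => ((1 + p ^ 2 : ℝ) : ℂ) := by
    refine ((isLittleO_const_left (c := a ^ 2 - 1)).2 (Or.inr ?_)).congr_left (fun p => ?_)
    · refine tendsto_atTop_mono (fun p => ?_) tendsto_norm_cocompact_atTop
      have h1p : (0 : ℝ) < 1 + p ^ 2 := by positivity
      simp only [Function.comp_apply, norm_real, Real.norm_eq_abs, abs_of_pos h1p]
      nlinarith [sq_abs p, sq_nonneg (|p| - 1)]
    · simp only [Pi.sub_apply]; push_cast; ring
  refine hcont.locallyIntegrable.integrable_of_isBigO_cocompact
    (hequiv.inv.isBigO.trans (isBigO_of_le _ fun p => ?_))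
    (integrable_inv_one_add_sq.integrableAtFilter _)
  simp only [Pi.inv_apply, norm_inv, norm_real, le_refl]

lemma integrable_cexp_mul_div_ofReal_sq_add_sq (ha : a.re ≠ 0) (x : ℝ) :
    Integrable fun p : ℝ => cexp (I * p * x) / (p ^ 2 + a ^ 2) := by
  simp_rw [div_eq_mul_inv]
  refine (integrable_inv_ofReal_sq_add_sq ha).bdd_mul (c := 1) (by fun_prop) ?_
  filter_upwards with p
  rw [norm_exp]
  simp

lemma cexp_neg_mul_abs_add_mul_eqOn_Iic :
    EqOn (fun y : ℝ => cexp (-a * |y| + b * y)) (fun y => cexp ((a + b) * y)) (Iic 0) := by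
  intro y hy
  simp only [abs_of_nonpos (mem_Iic.1 hy), ofReal_neg]
  ring_nf

lemma cexp_neg_mul_abs_add_mul_eqOn_Ioi :
    EqOn (fun y : ℝ => cexp (-a * |y| + b * y)) (fun y => cexp ((b - a) * y)) (Ioi 0) := by
  intro y hy
  simp only [abs_of_pos (mem_Ioi.1 hy)]
  ring_nf

lemma integrable_cexp_neg_mul_abs_add_mul (h : |b.re| < a.re) :
    Integrable fun y : ℝ => cexp (-a * |y| + b * y) := by
  rw [← integrableOn_univ, ← Iic_union_Ioi (a := (0 : ℝ))]
  obtain ⟨h₁, h₂⟩ := abs_lt.1 h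
  exact ((integrableOn_exp_mul_complex_Iic (by rw [add_re]; linarith) 0).congr_fun
      cexp_neg_mul_abs_add_mul_eqOn_Iic.symm measurableSet_Iic).union
    ((integrableOn_exp_mul_complex_Ioi (by rw [sub_re]; linarith) 0).congr_fun
      cexp_neg_mul_abs_add_mul_eqOn_Ioi.symm measurableSet_Ioi)

lemma integral_cexp_neg_mul_abs_add_mul (h : |b.re| < a.re) :
    ∫ y : ℝ, cexp (-a * |y| + b * y) = 2 * a / (a ^ 2 - b ^ 2) := by
  have hint := integrable_cexp_neg_mul_abs_add_mul h
  obtain ⟨h₁, h₂⟩ := abs_lt.1 h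
  have hplus : 0 < (a + b).re := by rw [add_re]; linarith
  have hminus : (b - a).re < 0 := by rw [sub_re]; linarith
  have hplus' : a + b ≠ 0 := fun h => by simp [h] at hplus
  have hminus' : b - a ≠ 0 := fun h => by simp [h] at hminus
  rw [← intervalIntegral.integral_Iic_add_Ioi hint.integrableOn hint.integrableOn,
    setIntegral_congr_fun measurableSet_Iic cexp_neg_mul_abs_add_mul_eqOn_Iic,
    setIntegral_congr_fun measurableSet_Ioi cexp_neg_mul_abs_add_mul_eqOn_Ioi,
    integral_exp_mul_complex_Iic hplus, integral_exp_mul_complex_Ioi hminus]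
  simp only [ofReal_zero, mul_zero, exp_zero]
  have hden : a ^ 2 - b ^ 2 ≠ 0 := by
    rw [sq_sub_sq]; exact mul_ne_zero hplus' (by rwa [← neg_sub, neg_ne_zero])
  field_simp
  ring

lemma fourier_cexp_neg_mul_abs (ha : 0 < a.re) (ξ : ℝ) :
    𝓕 (fun y : ℝ => cexp (-a * |y|)) ξ = 2 * a / ((2 * π * ξ) ^ 2 + a ^ 2) := by
  have hb : |(-2 * π * ξ * I).re| < a.re := by simpa using ha
  rw [Real.fourier_real_eq_integral_exp_smul]
  convert integral_cexp_neg_mul_abs_add_mul hb using 1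
  · congr 1 with y
    rw [smul_eq_mul, ← Complex.exp_add]
    push_cast
    ring_nf
  · congr 1
    linear_combination (2 * π * ξ) ^ 2 * I_sq

theorem integral_cexp_mul_div_ofReal_sq_add_sq (ha : 0 < a.re) (x : ℝ) :
    ∫ p : ℝ, cexp (I * p * x) / (p ^ 2 + a ^ 2) = π / a * cexp (-a * |x|) := by
  set f : ℝ → ℂ := fun y => cexp (-a * |y|)
  have hFf : 𝓕 f = fun ξ : ℝ => 2 * a * ((((2 * π) * ξ : ℝ) : ℂ) ^ 2 + a ^ 2)⁻¹ := by
    ext ξ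
    rw [fourier_cexp_neg_mul_abs ha, div_eq_mul_inv]
    push_cast; rfl
  have hFf_int : Integrable (𝓕 f) := by
    rw [hFf]
    exact ((integrable_inv_ofReal_sq_add_sq ha.ne').comp_mul_left' (by positivity)).const_mul _
  have hf_int : Integrable f := by
    simpa [f] using integrable_cexp_neg_mul_abs_add_mul (b := 0) (by simpa)
  have hinv := hf_int.fourierInv_fourier_eq hFf_int (v := x) (by fun_prop)
  rw [Real.fourierInv_eq', hFf] at hinv
  set G := ∫ p : ℝ, cexp (I * p * x) / (p ^ 2 + a ^ 2)
  have hsubst : ∫ v : ℝ, cexp (↑(2 * π * inner ℝ v x) * I) • (2 * a * (↑(2 * π * v) ^ 2 + a ^ 2)⁻¹)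
      = 2 * a * |(2 * π)⁻¹| • G := by
    rw [← Measure.integral_comp_mul_left, ← integral_const_mul]
    congr 1 with v
    simp only [smul_eq_mul, Real.inner_apply]
    push_cast
    rw [show (2 * π * (v * x) * I : ℂ) = I * (2 * π * v) * x by ring]
    ring
  have ha' : a ≠ 0 := fun h => by simp [h] at ha
  rw [hsubst, abs_of_pos (by positivity), real_smul] at hinv
  change G = π / a * f x
  rw [← hinv]
  push_cast
  field_simp

end

/-- the Green function of the one-dimensional Laplacian:
for `Im k > 0`, `∫_ℝ e^{ipx}/(p² − k²) dp = (πi/k) e^{ik|x|}`. -/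
theorem green_function_one_dim
    (k : ℂ) (hk : 0 < k.im) (x : ℝ) :
    Integrable (fun p : ℝ => Complex.exp (Complex.I * p * x) / (p ^ 2 - k ^ 2)) ∧
    (∫ p : ℝ, Complex.exp (Complex.I * p * x) / (p ^ 2 - k ^ 2))
      = (Real.pi * Complex.I / k) * Complex.exp (Complex.I * k * |x|) ∧
    (1 / (2 * Real.pi)) *
      (∫ p : ℝ, Complex.exp (Complex.I * p * x) / (p ^ 2 - k ^ 2))
      = (Complex.I / 2) * Complex.exp (Complex.I * k * |x|) / k := by
  have hre : 0 < (-I * k).re := by simpa using hk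
  have hsq : ∀ p : ℂ, p ^ 2 - k ^ 2 = p ^ 2 + (-I * k) ^ 2 := fun p => by
    linear_combination -k ^ 2 * I_sq
  have hk' : k ≠ 0 := fun h => by simp [h] at hk
  have hint : ∫ p : ℝ, cexp (I * p * x) / (p ^ 2 - k ^ 2) = π * I / k * cexp (I * k * |x|) := by
    simp only [hsq, integral_cexp_mul_div_ofReal_sq_add_sq hre]
    field_simp
    exact I_sq.symm
  refine ⟨by simpa only [hsq] using integrable_cexp_mul_div_ofReal_sq_add_sq hre.ne' x, hint, ?_⟩
  rw [hint]
  field_simp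
end
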